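/- arXiv:1909.13222 — 10 statements merged into one kernel-verified Lean document; each statement's English description precedes it below -/
import Mathlib

section
/- Let E and F be Banach lattices such that the lattice operations of F are weakly sequentially continuous. If T : E → F is a continuous linear operator that is order weakly compact, then T is o-σ-uaw-compact. -/
open Filter Topology

section Defs

variable {F : Type*} [NormedAddCommGroup F] [Lattice F] [HasSolidNorm F] [IsOrderedAddMonoid F] [NormedSpace ℝ F]

/-- A sequence `y` un-converges to `y₀`: for every `u ≥ 0`, `‖|y n - y₀| ⊓ u‖ → 0`. -/
def UnTendsto (y : ℕ → F) (y₀ : F) : Prop :=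
  ∀ u : F, 0 ≤ u → Tendsto (fun n => ‖|y n - y₀| ⊓ u‖) atTop (nhds 0)

/-- A sequence `y` uaw-converges to `y₀`: for every `u ≥ 0` and every positive continuous
linear functional `f`, `f (|y n - y₀| ⊓ u) → 0`. -/
def UawTendsto (y : ℕ → F) (y₀ : F) : Prop :=
  ∀ u : F, 0 ≤ u → ∀ f : F →L[ℝ] ℝ, (∀ z : F, 0 ≤ z → 0 ≤ f z) →
    Tendsto (fun n => f (|y n - y₀| ⊓ u)) atTop (nhds 0)

/-- A set is relatively sequentially un-compact: every sequence in it has a subsequence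
un-converging to some element of `F`. -/
def RelSeqUnCompact (A : Set F) : Prop :=
  ∀ y : ℕ → F, (∀ n, y n ∈ A) →
    ∃ (z : F) (φ : ℕ → ℕ), StrictMono φ ∧ UnTendsto (fun n => y (φ n)) z

/-- A set is relatively sequentially uaw-compact: every sequence in it has a subsequence
uaw-converging to some element of `F`. -/
def RelSeqUawCompact (A : Set F) : Prop :=
  ∀ y : ℕ → F, (∀ n, y n ∈ A) →
    ∃ (z : F) (φ : ℕ → ℕ), StrictMono φ ∧ UawTendsto (fun n => y (φ n)) z

end Defs

section OpDefs

variable {E F : Type*} [NormedAddCommGroup E] [Lattice E] [HasSolidNorm E] [IsOrderedAddMonoid E] [NormedSpace ℝ E]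
  [NormedAddCommGroup F] [Lattice F] [HasSolidNorm F] [IsOrderedAddMonoid F] [NormedSpace ℝ F]

/-- `T` is AM-σ-un-compact: the image of every order interval `[-x, x]` (`x ≥ 0`) is
relatively sequentially un-compact. -/
def AMSigmaUnCompact (T : E →L[ℝ] F) : Prop :=
  ∀ x : E, 0 ≤ x → RelSeqUnCompact (T '' Set.Icc (-x) x)

/-- `T` is o-σ-uaw-compact: the image of every order interval `[-x, x]` (`x ≥ 0`) is
relatively sequentially uaw-compact. -/
def OSigmaUawCompact (T : E →L[ℝ] F) : Prop :=
  ∀ x : E, 0 ≤ x → RelSeqUawCompact (T '' Set.Icc (-x) x)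

/-- Operator order: `OpLE S T` iff `(T - S) x ≥ 0` for all `x ≥ 0`. -/
def OpLE (S T : E →L[ℝ] F) : Prop := ∀ x : E, 0 ≤ x → S x ≤ T x

end OpDefs

section Weak

variable {F : Type*} [AddCommGroup F] [Module ℝ F] [TopologicalSpace F]

def WeaklyTendsto (y : ℕ → F) (z : F) : Prop :=
  ∀ f : F →L[ℝ] ℝ, Tendsto (fun n => f (y n)) atTop (𝓝 (f z))

theorem WeaklyTendsto.sub_const {y : ℕ → F} {z : F} (h : WeaklyTendsto y z) :
    WeaklyTendsto (fun n => y n - z) 0 := by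
  intro f
  simpa only [map_sub, map_zero, sub_self] using (h f).sub_const (f z)

theorem tendsto_apply_abs_inf_of_tendsto_apply_abs [Lattice F] [IsOrderedAddMonoid F]
    {ι : Type*} {l : Filter ι} {x : ι → F} {u : F} (hu : 0 ≤ u) {f : F →L[ℝ] ℝ}
    (hf : ∀ z : F, 0 ≤ z → 0 ≤ f z) (h : Tendsto (fun n => f |x n|) l (𝓝 0)) :
    Tendsto (fun n => f (|x n| ⊓ u)) l (𝓝 0) := by
  refine squeeze_zero (fun n => hf _ (le_inf (abs_nonneg _) hu)) (fun n => ?_) h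
  have := hf _ (sub_nonneg.2 (inf_le_left : |x n| ⊓ u ≤ |x n|))
  rwa [map_sub, sub_nonneg] at this

end Weak

theorem WeaklyTendsto.uawTendsto {F : Type*} [NormedAddCommGroup F] [Lattice F] [HasSolidNorm F]
    [IsOrderedAddMonoid F] [NormedSpace ℝ F]
    (habs : ∀ (y : ℕ → F) (y₀ : F), WeaklyTendsto y y₀ → WeaklyTendsto (fun n => |y n|) |y₀|)
    {y : ℕ → F} {z : F} (h : WeaklyTendsto y z) : UawTendsto y z := by
  intro u hu f hf
  have habs_sub := habs _ _ h.sub_const f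
  rw [abs_zero, map_zero] at habs_sub
  exact tendsto_apply_abs_inf_of_tendsto_apply_abs hu hf habs_sub

variable {E F : Type*}
  [NormedAddCommGroup E] [Lattice E] [HasSolidNorm E] [IsOrderedAddMonoid E] [NormedSpace ℝ E] [CompleteSpace E]
  [NormedAddCommGroup F] [Lattice F] [HasSolidNorm F] [IsOrderedAddMonoid F] [NormedSpace ℝ F] [CompleteSpace F]

/-- If the lattice operations of `F` are weakly sequentially continuous and `T` is order
weakly compact, then `T` is o-σ-uaw-compact. -/
theorem orderWeaklyCompact_oSigmaUawCompact
    (hwsc : ∀ (y : ℕ → F) (y₀ : F),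
      (∀ f : F →L[ℝ] ℝ, Tendsto (fun n => f (y n)) atTop (nhds (f y₀))) →
      ∀ f : F →L[ℝ] ℝ, Tendsto (fun n => f |y n|) atTop (nhds (f |y₀|)))
    (T : E →L[ℝ] F)
    (howc : ∀ x : E, 0 ≤ x → ∀ y : ℕ → F, (∀ n, y n ∈ T '' Set.Icc (-x) x) →
      ∃ (z : F) (φ : ℕ → ℕ), StrictMono φ ∧
        ∀ f : F →L[ℝ] ℝ, Tendsto (fun n => f (y (φ n))) atTop (nhds (f z))) :
    OSigmaUawCompact T := by
  intro x hx y hy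
  obtain ⟨z, φ, hφ, hweak⟩ := howc x hx y hy
  exact ⟨z, φ, hφ, WeaklyTendsto.uawTendsto hwsc hweak⟩
end

section
/- Let E and F be Banach lattices, and suppose F has order continuous norm. Then every o-σ-uaw-compact continuous linear operator T : E → F is AM-σ-un-compact. -/
/-!
Let `0 ≤ w n ≤ u` with `f (w n) → 0` for every positive functional `f`; applied to
`|y n - z| ⊓ u` this is uaw-convergence, and we show `‖w n‖ → 0`. Otherwise `‖w n‖ ≥ ε` along a
subsequence. Its supremum `s` exists by order continuity and completeness, and Hahn–Banach gives a
positive `f ≤ ‖·‖` on the positive cone with `f s ≥ ‖s‖ ≥ ε`. As `f (w n) → 0`, a further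
subsequence has `f`-values below a geometric sequence, so its supremum `s' ≤ s` has `f s' ≤ ε / 2`,
whence `‖s - s'‖ ≥ ε / 2`. Iterating yields a decreasing sequence, bounded below by `0`, whose
steps all have norm at least `ε / 2`; order continuity makes it Cauchy, a contradiction.
-/

open Filter Topology

section LatticeOrderedGroup

variable {G : Type*} [AddCommGroup G] [Lattice G] [IsOrderedAddMonoid G]

lemma posPart_add_le (x y : G) : (x + y)⁺ ≤ x⁺ + y⁺ :=
  sup_le (add_le_add (le_posPart x) (le_posPart y))
    (add_nonneg (posPart_nonneg x) (posPart_nonneg y))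

lemma nonneg_of_two_pow_nsmul_nonneg {y : G} : ∀ k : ℕ, 0 ≤ 2 ^ k • y → 0 ≤ y
  | 0, h => by simpa using h
  | k + 1, h => nonneg_of_two_pow_nsmul_nonneg k <| nsmul_two_semiclosed <| by
      rwa [← mul_nsmul', ← pow_succ']

lemma partialSups_le_sum {v : ℕ → G} (hv : ∀ n, 0 ≤ v n) (k : ℕ) :
    partialSups v k ≤ ∑ i ∈ Finset.range (k + 1), v i :=
  partialSups_le v k _ fun _ hj =>
    Finset.single_le_sum (fun i _ => hv i) (Finset.mem_range.2 (Nat.lt_succ_of_le hj))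

end LatticeOrderedGroup

section SolidNorm

variable {F : Type*} [NormedAddCommGroup F] [Lattice F] [HasSolidNorm F] [IsOrderedAddMonoid F]

lemma norm_le_norm_of_nonneg_of_le' {a b : F} (ha : 0 ≤ a) (hab : a ≤ b) : ‖a‖ ≤ ‖b‖ :=
  norm_le_norm_of_abs_le_abs <| by
    rw [abs_of_nonneg ha, abs_of_nonneg (ha.trans hab)]; exact hab

lemma norm_posPart_le (x : F) : ‖x⁺‖ ≤ ‖x‖ :=
  norm_le_norm_of_abs_le_abs <| by
    rw [abs_of_nonneg (posPart_nonneg x)]; exact sup_le (le_abs_self x) (abs_nonneg x)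

variable [NormedSpace ℝ F]

/-- No compatibility of the order with real scalars is assumed: it follows because the dyadic
multiples of a positive vector are positive and the positive cone is closed. -/
lemma smul_nonneg_of_hasSolidNorm {c : ℝ} (hc : 0 ≤ c) {x : F} (hx : 0 ≤ x) : 0 ≤ c • x := by
  have hdyadic : ∀ k : ℕ, 0 ≤ ((⌊c * 2 ^ k⌋₊ : ℝ) / 2 ^ k) • x := by
    intro k
    refine nonneg_of_two_pow_nsmul_nonneg k ?_
    rw [← Nat.cast_smul_eq_nsmul ℝ, smul_smul, Nat.cast_pow, Nat.cast_ofNat,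
      mul_div_cancel₀ _ (by positivity), Nat.cast_smul_eq_nsmul]
    exact nsmul_nonneg hx _
  have hlim : Tendsto (fun k : ℕ => (⌊c * 2 ^ k⌋₊ : ℝ) / 2 ^ k) atTop (𝓝 c) :=
    (tendsto_nat_floor_mul_div_atTop hc).comp (tendsto_pow_atTop_atTop_of_one_lt one_lt_two)
  exact isClosed_nonneg.mem_of_tendsto (hlim.smul_const x) (Eventually.of_forall hdyadic)

lemma posPart_smul_le {c : ℝ} (hc : 0 ≤ c) (x : F) : (c • x)⁺ ≤ c • x⁺ :=
  sup_le (by simpa [smul_sub] using smul_nonneg_of_hasSolidNorm hc (sub_nonneg.2 (le_posPart x)))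
    (smul_nonneg_of_hasSolidNorm hc (posPart_nonneg x))

lemma posPart_smul {c : ℝ} (hc : 0 < c) (x : F) : (c • x)⁺ = c • x⁺ := by
  refine le_antisymm (posPart_smul_le hc.le x) ?_
  have h := posPart_smul_le (inv_nonneg.2 hc.le) (c • x)
  rw [inv_smul_smul₀ hc.ne'] at h
  simpa [smul_sub, hc.ne'] using smul_nonneg_of_hasSolidNorm hc.le (sub_nonneg.2 h)

/-- Hahn–Banach with the sublinear functional `x ↦ ‖x⁺‖`: the bound `f x ≤ ‖x⁺‖` makes `f`
positive and at most the norm on the positive cone. -/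
lemma exists_nonneg_functional_norm_le {t : F} (ht : 0 ≤ t) (ht0 : t ≠ 0) :
    ∃ f : F →L[ℝ] ℝ, (∀ z, 0 ≤ z → 0 ≤ f z) ∧ (∀ z, 0 ≤ z → f z ≤ ‖z‖) ∧ ‖t‖ ≤ f t := by
  set f₀ : F →ₗ.[ℝ] ℝ := LinearPMap.mkSpanSingleton t ‖t‖ ht0
  have hf₀ : ∀ x : f₀.domain, f₀ x ≤ ‖(x : F)⁺‖ := by
    rintro ⟨x, hx⟩
    obtain ⟨c, rfl⟩ := Submodule.mem_span_singleton.1 hx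
    rw [LinearPMap.mkSpanSingleton'_apply, smul_eq_mul]
    rcases le_or_gt c 0 with hc | hc
    · exact (mul_nonpos_of_nonpos_of_nonneg hc (norm_nonneg t)).trans (norm_nonneg _)
    · rw [posPart_smul hc, posPart_eq_self.2 ht, norm_smul, Real.norm_of_nonneg hc.le,
        RingHom.id_apply]
  obtain ⟨g, hgt, hgN⟩ := exists_extension_of_le_sublinear f₀ (fun x => ‖x⁺‖)
    (fun c hc x => by rw [posPart_smul hc, norm_smul, Real.norm_of_nonneg hc.le])
    (fun x y => (norm_le_norm_of_nonneg_of_le' (posPart_nonneg _) (posPart_add_le x y)).trans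
      (norm_add_le _ _)) hf₀
  have hbound : ∀ x, ‖g x‖ ≤ 1 * ‖x‖ := by
    intro x
    rw [one_mul, Real.norm_eq_abs, abs_le]
    refine ⟨?_, (hgN x).trans (norm_posPart_le x)⟩
    have := (hgN (-x)).trans (norm_posPart_le (-x))
    rw [map_neg, norm_neg] at this
    linarith
  refine ⟨g.mkContinuous 1 hbound, fun z hz => ?_, fun z hz => ?_, ?_⟩
  · have := hgN (-z)
    rw [map_neg, posPart_eq_zero.2 (neg_nonpos.2 hz), norm_zero] at this
    simpa using this
  · simpa [posPart_eq_self.2 hz] using hgN z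
  · have := hgt ⟨t, Submodule.mem_span_singleton_self t⟩
    rw [LinearPMap.mkSpanSingleton_apply] at this
    simp [this]

end SolidNorm

def HasOrderContinuousNorm (F : Type*) [NormedAddCommGroup F] [Lattice F] : Prop :=
  ∀ D : Set F, D.Nonempty → DirectedOn (fun a b => b ≤ a) D → IsGLB D 0 →
    ∀ ε : ℝ, 0 < ε → ∃ d ∈ D, ‖d‖ < ε

section OrderContinuous

variable {F : Type*} [NormedAddCommGroup F] [Lattice F] [HasSolidNorm F] [IsOrderedAddMonoid F]

lemma eq_zero_of_forall_nsmul_le [NormedSpace ℝ F] {c b : F} (hc : 0 ≤ c)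
    (h : ∀ k : ℕ, k • c ≤ b) : c = 0 := by
  have hk : ∀ k : ℕ, (k : ℝ) * ‖c‖ ≤ ‖b‖ := fun k => by
    rw [← Real.norm_natCast k, ← norm_smul, Nat.cast_smul_eq_nsmul]
    exact norm_le_norm_of_nonneg_of_le' (nsmul_nonneg hc k) (h k)
  by_contra hne
  obtain ⟨k, hk'⟩ := exists_nat_gt (‖b‖ / ‖c‖)
  rw [div_lt_iff₀ (norm_pos_iff.2 hne)] at hk'
  linarith [hk k]

/-- A lower bound `c` makes every `u - k • c⁺` an upper bound, so `c⁺ = 0`. -/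
lemma isGLB_upperBounds_sub [NormedSpace ℝ F] {a : ℕ → F} {u : F}
    (hu : u ∈ upperBounds (Set.range a)) :
    IsGLB {d | ∃ b ∈ upperBounds (Set.range a), ∃ n, d = b - a n} 0 := by
  refine ⟨?_, fun c hc => ?_⟩
  · rintro _ ⟨b, hb, n, rfl⟩
    exact sub_nonneg.2 (hb ⟨n, rfl⟩)
  have hstep : ∀ b ∈ upperBounds (Set.range a), b - c⁺ ∈ upperBounds (Set.range a) := by
    rintro b hb _ ⟨n, rfl⟩
    exact le_sub_comm.1 (sup_le (hc ⟨b, hb, n, rfl⟩) (sub_nonneg.2 (hb ⟨n, rfl⟩)))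
  have hiter : ∀ k : ℕ, u - k • c⁺ ∈ upperBounds (Set.range a) := by
    intro k
    induction k with
    | zero => simpa using hu
    | succ k ih => simpa [succ_nsmul, sub_add_eq_sub_sub] using hstep _ ih
  have : c⁺ = 0 := eq_zero_of_forall_nsmul_le (posPart_nonneg c)
    fun k => le_sub_comm.1 (hiter k ⟨0, rfl⟩)
  exact posPart_eq_zero.1 this

namespace HasOrderContinuousNorm

lemma cauchySeq_of_monotone [NormedSpace ℝ F] (hoc : HasOrderContinuousNorm F) {a : ℕ → F}
    (ha : Monotone a) {u : F} (hu : ∀ n, a n ≤ u) : CauchySeq a := by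
  have hu' : u ∈ upperBounds (Set.range a) := by rintro _ ⟨n, rfl⟩; exact hu n
  set D := {d | ∃ b ∈ upperBounds (Set.range a), ∃ n, d = b - a n}
  have hdir : DirectedOn (fun x y => y ≤ x) D := by
    rintro _ ⟨b₁, hb₁, n₁, rfl⟩ _ ⟨b₂, hb₂, n₂, rfl⟩
    exact ⟨b₁ ⊓ b₂ - a (max n₁ n₂), ⟨b₁ ⊓ b₂, fun y hy => le_inf (hb₁ hy) (hb₂ hy), _, rfl⟩,
      sub_le_sub inf_le_left (ha (le_max_left _ _)),
      sub_le_sub inf_le_right (ha (le_max_right _ _))⟩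
  rw [Metric.cauchySeq_iff']
  intro ε hε
  obtain ⟨_, ⟨b, hb, N, rfl⟩, hd⟩ :=
    hoc D ⟨u - a 0, u, hu', 0, rfl⟩ hdir (isGLB_upperBounds_sub hu') ε hε
  refine ⟨N, fun n hn => lt_of_le_of_lt ?_ hd⟩
  rw [dist_eq_norm]
  exact norm_le_norm_of_nonneg_of_le' (sub_nonneg.2 (ha hn)) (sub_le_sub_right (hb ⟨n, rfl⟩) _)

lemma cauchySeq_of_antitone [NormedSpace ℝ F] (hoc : HasOrderContinuousNorm F) {a : ℕ → F}
    (ha : Antitone a) {l : F} (hl : ∀ n, l ≤ a n) : CauchySeq a := by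
  simpa using (hoc.cauchySeq_of_monotone (a := -a) (fun _ _ h => neg_le_neg (ha h))
    (u := -l) fun n => neg_le_neg (hl n)).neg

lemma exists_isLUB [NormedSpace ℝ F] [CompleteSpace F] (hoc : HasOrderContinuousNorm F)
    {v : ℕ → F} {u : F} (hu : ∀ n, v n ≤ u) : ∃ s, IsLUB (Set.range v) s := by
  obtain ⟨s, hs⟩ := cauchySeq_tendsto_of_complete <|
    hoc.cauchySeq_of_monotone (partialSups v).monotone fun n => partialSups_le v n u fun j _ => hu j
  have := isLUB_of_tendsto_atTop (partialSups v).monotone hs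
  rw [IsLUB, upperBounds_range_partialSups] at this
  exact ⟨s, this⟩

lemma tendsto_of_monotone_of_isLUB (hoc : HasOrderContinuousNorm F) {a : ℕ → F}
    (ha : Monotone a) {s : F} (hs : IsLUB (Set.range a) s) : Tendsto a atTop (𝓝 s) := by
  have hle : ∀ n, a n ≤ s := fun n => hs.1 ⟨n, rfl⟩
  have hglb : IsGLB (Set.range fun n => s - a n) 0 := by
    refine ⟨?_, fun c hc => ?_⟩
    · rintro _ ⟨n, rfl⟩
      exact sub_nonneg.2 (hle n)
    · have : s ≤ s - c := hs.2 (by rintro _ ⟨n, rfl⟩; exact le_sub_comm.1 (hc ⟨n, rfl⟩))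
      simpa using this
  rw [tendsto_iff_norm_sub_tendsto_zero, Metric.tendsto_atTop]
  intro ε hε
  obtain ⟨_, ⟨N, rfl⟩, hN⟩ := hoc _ (Set.range_nonempty _)
    (directedOn_range.2 fun m n => ⟨max m n, sub_le_sub_left (ha (le_max_left _ _)) _,
      sub_le_sub_left (ha (le_max_right _ _)) _⟩) hglb ε hε
  refine ⟨N, fun n hn => ?_⟩
  rw [dist_zero_right, norm_norm, norm_sub_rev]
  exact lt_of_le_of_lt (norm_le_norm_of_nonneg_of_le' (sub_nonneg.2 (hle n))
    (sub_le_sub_left (ha hn) _)) hN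

end HasOrderContinuousNorm

end OrderContinuous

section UawToUn

variable {F : Type*} [NormedAddCommGroup F] [Lattice F] [HasSolidNorm F] [IsOrderedAddMonoid F]
  [NormedSpace ℝ F]

namespace HasOrderContinuousNorm

lemma apply_isLUB_le_of_geometric (hoc : HasOrderContinuousNorm F) {v : ℕ → F} (hv : ∀ n, 0 ≤ v n)
    {s : F} (hs : IsLUB (Set.range v) s) {f : F →L[ℝ] ℝ} (hf : ∀ z, 0 ≤ z → 0 ≤ f z) {δ : ℝ}
    (hδ : 0 ≤ δ) (hfv : ∀ k, f (v k) ≤ δ * (1 / 2) ^ k) : f s ≤ 2 * δ := by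
  have hps : IsLUB (Set.range (partialSups v)) s := by rwa [IsLUB, upperBounds_range_partialSups]
  refine le_of_tendsto ((f.continuous.tendsto s).comp
    (hoc.tendsto_of_monotone_of_isLUB (partialSups v).monotone hps))
    (Eventually.of_forall fun k => ?_)
  calc f (partialSups v k) ≤ f (∑ i ∈ Finset.range (k + 1), v i) :=
        (monotone_iff_map_nonneg f).2 hf (partialSups_le_sum hv k)
    _ = ∑ i ∈ Finset.range (k + 1), f (v i) := map_sum f _ _
    _ ≤ ∑ i ∈ Finset.range (k + 1), δ * (1 / 2) ^ i := Finset.sum_le_sum fun i _ => hfv i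
    _ = δ * ∑ i ∈ Finset.range (k + 1), (1 / 2 : ℝ) ^ i := (Finset.mul_sum ..).symm
    _ ≤ δ * 2 := mul_le_mul_of_nonneg_left (sum_geometric_two_le _) hδ
    _ = 2 * δ := mul_comm _ _

lemma exists_subseq_apply_isLUB_le (hoc : HasOrderContinuousNorm F) {v : ℕ → F}
    (hv : ∀ n, 0 ≤ v n) {f : F →L[ℝ] ℝ} (hf : ∀ z, 0 ≤ z → 0 ≤ f z)
    (hfv : Tendsto (fun n => f (v n)) atTop (𝓝 0)) {δ : ℝ} (hδ : 0 < δ) :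
    ∃ ψ : ℕ → ℕ, StrictMono ψ ∧ ∀ s, IsLUB (Set.range (v ∘ ψ)) s → f s ≤ δ := by
  have hev : ∀ k, ∀ᶠ n in atTop, f (v n) ≤ δ / 2 * (1 / 2) ^ k := fun k =>
    (hfv.eventually_lt_const (by positivity)).mono fun _ h => h.le
  obtain ⟨ψ, hψ, hψv⟩ := extraction_forall_of_eventually hev
  refine ⟨ψ, hψ, fun s hs => ?_⟩
  have := hoc.apply_isLUB_le_of_geometric (fun n => hv (ψ n)) hs hf (by positivity) hψv
  linarith

/-- Iterating the hypothesis gives a decreasing sequence, bounded below by `0`, whose consecutive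
terms stay `ε` apart; order continuity makes such a sequence Cauchy. -/
lemma not_forall_exists_le_and_le_norm_sub (hoc : HasOrderContinuousNorm F) {α : Type*}
    [Nonempty α] {t : α → F} (ht : ∀ a, 0 ≤ t a) {ε : ℝ} (hε : 0 < ε) :
    ¬ ∀ a, ∃ b, t b ≤ t a ∧ ε ≤ ‖t a - t b‖ := by
  intro h
  choose next hle hgap using h
  obtain ⟨a₀⟩ := ‹Nonempty α›
  have hsucc : ∀ j, next^[j + 1] a₀ = next (next^[j] a₀) := fun j =>
    Function.iterate_succ_apply' next j a₀
  have hanti : Antitone fun j => t (next^[j] a₀) :=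
    antitone_nat_of_succ_le fun j => by rw [hsucc]; exact hle _
  obtain ⟨N, hN⟩ := Metric.cauchySeq_iff'.1
    (hoc.cauchySeq_of_antitone hanti fun j => ht _) ε hε
  have := hN (N + 1) N.le_succ
  rw [hsucc, dist_eq_norm, norm_sub_rev] at this
  exact (hgap _).not_gt this

lemma tendsto_norm_zero_of_forall_nonneg_functional [CompleteSpace F]
    (hoc : HasOrderContinuousNorm F) {w : ℕ → F} {u : F} (hw0 : ∀ n, 0 ≤ w n)
    (hwu : ∀ n, w n ≤ u)
    (hw : ∀ f : F →L[ℝ] ℝ, (∀ z, 0 ≤ z → 0 ≤ f z) → Tendsto (fun n => f (w n)) atTop (𝓝 0)) :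
    Tendsto (fun n => ‖w n‖) atTop (𝓝 0) := by
  by_contra hnot
  obtain ⟨ε, hε, hfreq⟩ : ∃ ε > 0, ∃ᶠ n in atTop, ε ≤ ‖w n‖ := by
    simpa [Metric.tendsto_atTop, Filter.frequently_atTop, Real.dist_eq] using hnot
  obtain ⟨σ, hσ, hwσ⟩ := extraction_of_frequently_atTop hfreq
  have hsup : ∀ S : {S : ℕ → ℕ // StrictMono S}, ∃ s, IsLUB (Set.range (w ∘ σ ∘ S.1)) s :=
    fun S => hoc.exists_isLUB fun n => hwu _
  choose s hs using hsup
  have : Nonempty {S : ℕ → ℕ // StrictMono S} := ⟨⟨id, strictMono_id⟩⟩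
  have hws : ∀ S, w (σ (S.1 0)) ≤ s S := fun S => (hs S).1 ⟨0, rfl⟩
  refine hoc.not_forall_exists_le_and_le_norm_sub (t := s) (fun S => (hw0 _).trans (hws S))
    (half_pos hε) fun S => ?_
  have hεs : ε ≤ ‖s S‖ := (hwσ _).trans (norm_le_norm_of_nonneg_of_le' (hw0 _) (hws S))
  obtain ⟨f, hf0, hfn, hfs⟩ := exists_nonneg_functional_norm_le ((hw0 _).trans (hws S))
    (norm_pos_iff.1 (hε.trans_le hεs))
  obtain ⟨ψ, hψ, hfψ⟩ := hoc.exists_subseq_apply_isLUB_le (fun n => hw0 _) hf0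
    ((hw f hf0).comp (hσ.comp S.2).tendsto_atTop) (half_pos hε)
  set S' : {S : ℕ → ℕ // StrictMono S} := ⟨S.1 ∘ ψ, S.2.comp hψ⟩
  have hle : s S' ≤ s S := (hs S').mono (hs S) (Set.range_comp_subset_range ψ (w ∘ σ ∘ S.1))
  refine ⟨S', hle, ?_⟩
  calc ε / 2 ≤ f (s S) - f (s S') := by linarith [hfψ _ (hs S')]
    _ = f (s S - s S') := (map_sub f _ _).symm
    _ ≤ ‖s S - s S'‖ := hfn _ (sub_nonneg.2 hle)

lemma unTendsto_of_uawTendsto [CompleteSpace F] (hoc : HasOrderContinuousNorm F) {y : ℕ → F}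
    {z : F} (h : UawTendsto y z) : UnTendsto y z := fun u hu =>
  hoc.tendsto_norm_zero_of_forall_nonneg_functional (fun _ => le_inf (abs_nonneg _) hu)
    (fun _ => inf_le_right) (h u hu)

end HasOrderContinuousNorm

end UawToUn

variable {E F : Type*}
  [NormedAddCommGroup E] [Lattice E] [HasSolidNorm E] [IsOrderedAddMonoid E] [NormedSpace ℝ E] [CompleteSpace E]
  [NormedAddCommGroup F] [Lattice F] [HasSolidNorm F] [IsOrderedAddMonoid F] [NormedSpace ℝ F] [CompleteSpace F]

/-- If `F` has order continuous norm, then every o-σ-uaw-compact operator is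
AM-σ-un-compact. -/
theorem oSigmaUawCompact_aMSigmaUnCompact
    (hoc : ∀ D : Set F, D.Nonempty → DirectedOn (fun a b => b ≤ a) D → IsGLB D 0 →
      ∀ ε : ℝ, 0 < ε → ∃ d ∈ D, ‖d‖ < ε)
    (T : E →L[ℝ] F) (hT : OSigmaUawCompact T) :
    AMSigmaUnCompact T := by
  intro x hx y hy
  obtain ⟨z, φ, hφ, hyz⟩ := hT x hx y hy
  exact ⟨z, φ, hφ, HasOrderContinuousNorm.unTendsto_of_uawTendsto hoc hyz⟩
end

section
/- Let E, F, G be Banach lattices. If S : E → F is an AM-σ-un-compact continuous linear operator and T : F → G is a σ-strong continuous operator, then the composition T ∘ S is AM-compact. -/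
/-!
An order interval `[-x, x]` is norm bounded, so every sequence `S xₙ` with `xₙ ∈ [-x, x]` has
a subsequence `S x_{φ n}` un-converging to some `z`, and `S x_{φ n} - z` is a norm-bounded
sequence un-converging to `0`. σ-strong continuity of `T` turns this into norm convergence
`T S x_{φ n} → T z`. Hence every sequence in `T S [-x, x]` has a norm-convergent subsequence,
which in a metric space makes the closure compact.
-/

open Filter Topology

theorem isCompact_closure_of_forall_exists_subseq_tendsto {X : Type*} [PseudoMetricSpace X]
    {s : Set X}
    (h : ∀ u : ℕ → X, (∀ n, u n ∈ s) →
      ∃ (a : X) (φ : ℕ → ℕ), StrictMono φ ∧ Tendsto (u ∘ φ) atTop (𝓝 a)) :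
    IsCompact (closure s) := by
  refine IsSeqCompact.isCompact fun w hw => ?_
  have happrox : ∀ n : ℕ, ∃ v ∈ s, dist (w n) v < 1 / (n + 1) := fun n =>
    Metric.mem_closure_iff.mp (hw n) _ Nat.one_div_pos_of_nat
  choose v hvs hwv using happrox
  obtain ⟨a, φ, hφ, hva⟩ := h v hvs
  have hdist : Tendsto (fun n => dist (v (φ n)) (w (φ n))) atTop (𝓝 0) :=
    squeeze_zero (fun _ => dist_nonneg) (fun n => by rw [dist_comm]; exact (hwv (φ n)).le)
      (tendsto_one_div_add_atTop_nhds_zero_nat.comp hφ.tendsto_atTop)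
  exact ⟨a, mem_closure_of_tendsto hva (.of_forall fun n => hvs (φ n)), φ, hφ, hva.congr_dist hdist⟩

section BanachLattice

variable {E : Type*} [NormedAddCommGroup E] [Lattice E]

theorem norm_le_norm_of_mem_Icc_neg [HasSolidNorm E] [IsOrderedAddMonoid E] {x z : E}
    (hz : z ∈ Set.Icc (-x) x) : ‖z‖ ≤ ‖x‖ :=
  norm_le_norm_of_abs_le_abs <| (abs_le'.mpr ⟨hz.2, neg_le.mp hz.1⟩).trans (le_abs_self x)

theorem unTendsto_iff_sub_unTendsto_zero {y : ℕ → E} {z : E} :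
    UnTendsto y z ↔ UnTendsto (fun n => y n - z) 0 := by
  simp only [UnTendsto, sub_zero]

end BanachLattice

section Operators

variable {E F G : Type*} [NormedAddCommGroup F] [Lattice F] [NormedSpace ℝ F]
  [NormedAddCommGroup G] [NormedSpace ℝ G]

def IsSigmaStrongContinuous (T : F →L[ℝ] G) : Prop :=
  ∀ y : ℕ → F, (∃ C : ℝ, ∀ n, ‖y n‖ ≤ C) → UnTendsto y 0 →
    Tendsto (fun n => ‖T (y n)‖) atTop (𝓝 0)

theorem IsSigmaStrongContinuous.tendsto_of_unTendsto {T : F →L[ℝ] G}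
    (hT : IsSigmaStrongContinuous T) {y : ℕ → F} {z : F} (hbdd : ∃ C : ℝ, ∀ n, ‖y n‖ ≤ C)
    (hyz : UnTendsto y z) : Tendsto (fun n => T (y n)) atTop (𝓝 (T z)) := by
  obtain ⟨C, hC⟩ := hbdd
  have hbdd' : ∃ C : ℝ, ∀ n, ‖y n - z‖ ≤ C :=
    ⟨C + ‖z‖, fun n => (norm_sub_le _ _).trans (by gcongr; exact hC n)⟩
  rw [tendsto_iff_norm_sub_tendsto_zero]
  simpa only [map_sub] using hT _ hbdd' (unTendsto_iff_sub_unTendsto_zero.mp hyz)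

theorem AMSigmaUnCompact.exists_subseq_tendsto_comp
    [NormedAddCommGroup E] [Lattice E] [HasSolidNorm E] [IsOrderedAddMonoid E] [NormedSpace ℝ E]
    [HasSolidNorm F] [IsOrderedAddMonoid F] {S : E →L[ℝ] F} (hS : AMSigmaUnCompact S)
    {T : F →L[ℝ] G} (hT : IsSigmaStrongContinuous T) {x : E} (hx : 0 ≤ x) {u : ℕ → G}
    (hu : ∀ n, u n ∈ (T.comp S) '' Set.Icc (-x) x) :
    ∃ (a : G) (φ : ℕ → ℕ), StrictMono φ ∧ Tendsto (u ∘ φ) atTop (𝓝 a) := by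
  choose xs hxs hxsu using hu
  obtain rfl : (fun n => T (S (xs n))) = u := funext hxsu
  obtain ⟨z, φ, hφ, hun⟩ := hS x hx (fun n => S (xs n)) fun n => ⟨xs n, hxs n, rfl⟩
  have hbdd : ∃ C : ℝ, ∀ n, ‖S (xs (φ n))‖ ≤ C :=
    ⟨‖S‖ * ‖x‖, fun n => S.le_of_opNorm_le_of_le le_rfl (norm_le_norm_of_mem_Icc_neg (hxs (φ n)))⟩
  exact ⟨T z, φ, hφ, hT.tendsto_of_unTendsto hbdd hun⟩

end Operators

variable {E F G : Type*}
  [NormedAddCommGroup E] [Lattice E] [HasSolidNorm E] [IsOrderedAddMonoid E] [NormedSpace ℝ E] [CompleteSpace E]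
  [NormedAddCommGroup F] [Lattice F] [HasSolidNorm F] [IsOrderedAddMonoid F] [NormedSpace ℝ F] [CompleteSpace F]
  [NormedAddCommGroup G] [Lattice G] [HasSolidNorm G] [IsOrderedAddMonoid G] [NormedSpace ℝ G] [CompleteSpace G]

/-- The composition of an AM-σ-un-compact operator with a σ-strong continuous operator
is AM-compact. -/
theorem comp_sigmaStrongContinuous_aMCompact
    (S : E →L[ℝ] F) (hS : AMSigmaUnCompact S)
    (T : F →L[ℝ] G)
    (hT : ∀ y : ℕ → F, (∃ C : ℝ, ∀ n, ‖y n‖ ≤ C) → UnTendsto y 0 →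
      Tendsto (fun n => ‖T (y n)‖) atTop (nhds 0)) :
    ∀ x : E, 0 ≤ x → IsCompact (closure ((T.comp S) '' Set.Icc (-x) x)) := fun _ hx =>
  isCompact_closure_of_forall_exists_subseq_tendsto fun _ hu =>
    hS.exists_subseq_tendsto_comp hT hx hu
end

section
/- Let E, F, G be Banach lattices. If S : E → F is an AM-σ-un-compact continuous linear operator and T : F → G is a σ-unbounded norm continuous operator, then the composition T ∘ S is AM-σ-un-compact. -/
/-! Order intervals are norm bounded because the norm is solid, so `S` maps `[-x, x]` to a bounded
set. A sequence in `T S [-x, x]` lifts to one in `S [-x, x]`, which has an un-convergent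
subsequence; applied to its bounded differences from the limit, σ-un-continuity of `T` makes the
image subsequence un-converge as well. -/

open Filter Topology

section UnConvergence

variable {F G : Type*} [NormedAddCommGroup F] [Lattice F]

theorem unTendsto_sub_const_zero_iff {y : ℕ → F} {y₀ : F} :
    UnTendsto (fun n => y n - y₀) 0 ↔ UnTendsto y y₀ := by
  simp only [UnTendsto, sub_zero]

theorem isBounded_Icc_neg [HasSolidNorm F] [IsOrderedAddMonoid F] (a : F) :
    Bornology.IsBounded (Set.Icc (-a) a) :=
  isBounded_iff_forall_norm_le.mpr
    ⟨‖a‖, fun _ hx => norm_le_norm_of_abs_le_abs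
      ((abs_le'.mpr ⟨hx.2, neg_le.mp hx.1⟩).trans (le_abs_self a))⟩

variable [NormedSpace ℝ F] [NormedAddCommGroup G] [Lattice G] [NormedSpace ℝ G]

def SigmaUnContinuous (T : F →L[ℝ] G) : Prop :=
  ∀ y : ℕ → F, (∃ C : ℝ, ∀ n, ‖y n‖ ≤ C) → UnTendsto y 0 → UnTendsto (fun n => T (y n)) 0

theorem SigmaUnContinuous.unTendsto_map {T : F →L[ℝ] G} (hT : SigmaUnContinuous T)
    {y : ℕ → F} {z : F} (hy : ∃ C : ℝ, ∀ n, ‖y n‖ ≤ C) (hyz : UnTendsto y z) :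
    UnTendsto (fun n => T (y n)) (T z) := by
  obtain ⟨C, hC⟩ := hy
  have hbound : ∀ n, ‖y n - z‖ ≤ C + ‖z‖ := fun n =>
    (norm_sub_le _ _).trans (add_le_add_left (hC n) _)
  simpa only [map_sub, unTendsto_sub_const_zero_iff] using
    hT _ ⟨_, hbound⟩ (unTendsto_sub_const_zero_iff.mpr hyz)

theorem RelSeqUnCompact.image_of_isBounded {A : Set F} (hA : RelSeqUnCompact A)
    (hAb : Bornology.IsBounded A) {T : F →L[ℝ] G} (hT : SigmaUnContinuous T) :
    RelSeqUnCompact (T '' A) := by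
  intro w hw
  choose y hyA hyw using hw
  obtain ⟨z, φ, hφ, hyz⟩ := hA y hyA
  obtain ⟨C, hC⟩ := isBounded_iff_forall_norm_le.mp hAb
  refine ⟨T z, φ, hφ, ?_⟩
  simpa only [hyw] using hT.unTendsto_map ⟨C, fun n => hC _ (hyA (φ n))⟩ hyz

end UnConvergence

variable {E F G : Type*}
  [NormedAddCommGroup E] [Lattice E] [HasSolidNorm E] [IsOrderedAddMonoid E] [NormedSpace ℝ E] [CompleteSpace E]
  [NormedAddCommGroup F] [Lattice F] [HasSolidNorm F] [IsOrderedAddMonoid F] [NormedSpace ℝ F] [CompleteSpace F]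
  [NormedAddCommGroup G] [Lattice G] [HasSolidNorm G] [IsOrderedAddMonoid G] [NormedSpace ℝ G] [CompleteSpace G]

/-- The composition of an AM-σ-un-compact operator with a σ-unbounded norm continuous
operator is AM-σ-un-compact. -/
theorem comp_sigmaUnContinuous_aMSigmaUnCompact
    (S : E →L[ℝ] F) (hS : AMSigmaUnCompact S)
    (T : F →L[ℝ] G)
    (hT : ∀ y : ℕ → F, (∃ C : ℝ, ∀ n, ‖y n‖ ≤ C) → UnTendsto y 0 →
      UnTendsto (fun n => T (y n)) 0) :
    AMSigmaUnCompact (T.comp S) := by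
  intro x hx
  rw [ContinuousLinearMap.coe_comp, Set.image_comp]
  exact (hS x hx).image_of_isBounded (S.lipschitz.isBounded_image (isBounded_Icc_neg x)) hT
end

section
/- Let E, F, G be Banach lattices. If S : E → F is an o-σ-uaw-compact continuous linear operator and T : F → G is a σ-unbounded Dunford–Pettis operator, then the composition T ∘ S is AM-σ-un-compact. -/
/-!
Given `x ≥ 0` and a sequence in `(T ∘ S)[-x, x]`, lift it to a sequence `aₙ` in `[-x, x]`.
Since `S` is o-σ-uaw-compact, a subsequence `S a_{φ n}` uaw-converges to some `z`; this
subsequence is norm bounded because order intervals are norm bounded for a solid norm.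
Hence `S a_{φ n} - z` is a norm-bounded uaw-null sequence, which the σ-unbounded Dunford–Pettis
operator `T` maps to an un-null sequence, i.e. `T S a_{φ n}` un-converges to `T z`.
-/

open Filter Topology

section Interval

variable {α : Type*} [NormedAddCommGroup α] [Lattice α] [HasSolidNorm α] [IsOrderedAddMonoid α]

theorem norm_le_norm_of_mem_Icc_neg_s6 {x a : α} (ha : a ∈ Set.Icc (-x) x) : ‖a‖ ≤ ‖x‖ :=
  norm_le_norm_of_abs_le_abs <|
    abs_le'.2 ⟨ha.2.trans (le_abs_self x), (neg_le.1 ha.1).trans (le_abs_self x)⟩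

theorem isBounded_Icc_neg_s6 (x : α) : Bornology.IsBounded (Set.Icc (-x) x) :=
  isBounded_iff_forall_norm_le.2 ⟨‖x‖, fun _ ha => norm_le_norm_of_mem_Icc_neg_s6 ha⟩

end Interval

section Convergence

variable {X : Type*} [NormedAddCommGroup X] [Lattice X]

theorem unTendsto_sub_zero_iff {y : ℕ → X} {z : X} :
    UnTendsto (fun n => y n - z) 0 ↔ UnTendsto y z := by
  simp only [UnTendsto, sub_zero]

theorem uawTendsto_sub_zero_iff [NormedSpace ℝ X] {y : ℕ → X} {z : X} :
    UawTendsto (fun n => y n - z) 0 ↔ UawTendsto y z := by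
  simp only [UawTendsto, sub_zero]

end Convergence

section DunfordPettis

variable {X Y : Type*} [NormedAddCommGroup X] [Lattice X] [NormedSpace ℝ X]
  [NormedAddCommGroup Y] [Lattice Y] [NormedSpace ℝ Y]

def SigmaUnboundedDunfordPettis (T : X →L[ℝ] Y) : Prop :=
  ∀ y : ℕ → X, (∃ C : ℝ, ∀ n, ‖y n‖ ≤ C) → UawTendsto y 0 → UnTendsto (fun n => T (y n)) 0

theorem SigmaUnboundedDunfordPettis.relSeqUnCompact_image {T : X →L[ℝ] Y}
    (hT : SigmaUnboundedDunfordPettis T) {A : Set X} (hA_bdd : Bornology.IsBounded A)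
    (hA : RelSeqUawCompact A) : RelSeqUnCompact (T '' A) := by
  intro y hy
  choose a ha hTa using hy
  obtain ⟨z, φ, hφ, hconv⟩ := hA a ha
  obtain ⟨C, hC⟩ := hA_bdd.exists_norm_le
  have hbdd : ∃ C' : ℝ, ∀ n, ‖a (φ n) - z‖ ≤ C' :=
    ⟨C + ‖z‖, fun n => (norm_sub_le _ _).trans (by gcongr; exact hC _ (ha _))⟩
  have hnull := hT _ hbdd (uawTendsto_sub_zero_iff.2 hconv)
  refine ⟨T z, φ, hφ, ?_⟩
  simpa only [map_sub, hTa, unTendsto_sub_zero_iff] using hnull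

end DunfordPettis

variable {E F G : Type*}
  [NormedAddCommGroup E] [Lattice E] [HasSolidNorm E] [IsOrderedAddMonoid E] [NormedSpace ℝ E] [CompleteSpace E]
  [NormedAddCommGroup F] [Lattice F] [HasSolidNorm F] [IsOrderedAddMonoid F] [NormedSpace ℝ F] [CompleteSpace F]
  [NormedAddCommGroup G] [Lattice G] [HasSolidNorm G] [IsOrderedAddMonoid G] [NormedSpace ℝ G] [CompleteSpace G]

/-- The composition of an o-σ-uaw-compact operator with a σ-unbounded Dunford–Pettis
operator is AM-σ-un-compact. -/
theorem comp_sigmaUnboundedDP_aMSigmaUnCompact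
    (S : E →L[ℝ] F) (hS : OSigmaUawCompact S)
    (T : F →L[ℝ] G)
    (hT : ∀ y : ℕ → F, (∃ C : ℝ, ∀ n, ‖y n‖ ≤ C) → UawTendsto y 0 →
      UnTendsto (fun n => T (y n)) 0) :
    AMSigmaUnCompact (T.comp S) := by
  intro x hx
  have hSx : Bornology.IsBounded (S '' Set.Icc (-x) x) :=
    S.lipschitz.isBounded_image (isBounded_Icc_neg_s6 x)
  have h := SigmaUnboundedDunfordPettis.relSeqUnCompact_image hT hSx (hS x hx)
  rwa [Set.image_image] at h
end

section
/- Let E, F, G be Banach lattices. If S : E → F is an o-σ-uaw-compact continuous linear operator and T : F → G is a σ-unbounded absolute weak continuous operator, then the composition T ∘ S is o-σ-uaw-compact. -/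
open Filter Topology

/-! In a lattice with solid norm, order intervals are norm bounded, so `S` maps `[-x, x]` into a
bounded set. If `S aₙ` uaw-converges to `z` along a subsequence, `S aₙ - z` is a bounded
uaw-null sequence, which `T` keeps uaw-null; by linearity `T (S aₙ)` uaw-converges to `T z`. -/

section SigmaUawContinuous

variable {F G : Type*} [NormedAddCommGroup F] [Lattice F] [NormedSpace ℝ F]
  [NormedAddCommGroup G] [Lattice G] [NormedSpace ℝ G]

def SigmaUawContinuous (T : F →L[ℝ] G) : Prop :=
  ∀ y : ℕ → F, (∃ C : ℝ, ∀ n, ‖y n‖ ≤ C) → UawTendsto y 0 → UawTendsto (fun n => T (y n)) 0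

theorem uawTendsto_iff_sub_uawTendsto_zero {y : ℕ → F} {y₀ : F} :
    UawTendsto y y₀ ↔ UawTendsto (fun n => y n - y₀) 0 := by
  simp only [UawTendsto, sub_zero]

theorem SigmaUawContinuous.uawTendsto {T : F →L[ℝ] G} (hT : SigmaUawContinuous T)
    {y : ℕ → F} {y₀ : F} (hbdd : ∃ C : ℝ, ∀ n, ‖y n‖ ≤ C) (hy : UawTendsto y y₀) :
    UawTendsto (fun n => T (y n)) (T y₀) := by
  obtain ⟨C, hC⟩ := hbdd
  have hbdd_sub : ∃ C' : ℝ, ∀ n, ‖y n - y₀‖ ≤ C' :=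
    ⟨C + ‖y₀‖, fun n => (norm_sub_le _ _).trans (by linarith [hC n])⟩
  rw [uawTendsto_iff_sub_uawTendsto_zero] at hy ⊢
  simpa only [map_sub] using hT _ hbdd_sub hy

end SigmaUawContinuous

theorem norm_le_norm_of_mem_Icc_neg_s7 {F : Type*} [NormedAddCommGroup F] [Lattice F]
    [HasSolidNorm F] [IsOrderedAddMonoid F] {x u : F} (hx : x ∈ Set.Icc (-u) u) : ‖x‖ ≤ ‖u‖ :=
  norm_le_norm_of_abs_le_abs (abs_le_abs hx.2 (neg_le.mp hx.1))

theorem ContinuousLinearMap.exists_norm_apply_le_of_mem_Icc {E F : Type*}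
    [NormedAddCommGroup E] [Lattice E] [HasSolidNorm E] [IsOrderedAddMonoid E] [NormedSpace ℝ E]
    [NormedAddCommGroup F] [NormedSpace ℝ F]
    (S : E →L[ℝ] F) {x : E} {a : ℕ → E} (ha : ∀ n, a n ∈ Set.Icc (-x) x) :
    ∃ C : ℝ, ∀ n, ‖S (a n)‖ ≤ C :=
  ⟨‖S‖ * ‖x‖, fun n => S.le_opNorm_of_le (norm_le_norm_of_mem_Icc_neg_s7 (ha n))⟩

variable {E F G : Type*}
  [NormedAddCommGroup E] [Lattice E] [HasSolidNorm E] [IsOrderedAddMonoid E] [NormedSpace ℝ E] [CompleteSpace E]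
  [NormedAddCommGroup F] [Lattice F] [HasSolidNorm F] [IsOrderedAddMonoid F] [NormedSpace ℝ F] [CompleteSpace F]
  [NormedAddCommGroup G] [Lattice G] [HasSolidNorm G] [IsOrderedAddMonoid G] [NormedSpace ℝ G] [CompleteSpace G]

/-- The composition of an o-σ-uaw-compact operator with a σ-unbounded absolute weak
continuous operator is o-σ-uaw-compact. -/
theorem comp_sigmaUawContinuous_oSigmaUawCompact
    (S : E →L[ℝ] F) (hS : OSigmaUawCompact S)
    (T : F →L[ℝ] G)
    (hT : ∀ y : ℕ → F, (∃ C : ℝ, ∀ n, ‖y n‖ ≤ C) → UawTendsto y 0 →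
      UawTendsto (fun n => T (y n)) 0) :
    OSigmaUawCompact (T.comp S) := by
  intro x hx y hy
  choose a ha hay using hy
  obtain ⟨z, φ, hφ, hz⟩ := hS x hx (fun n => S (a n)) fun n => ⟨a n, ha n, rfl⟩
  refine ⟨T z, φ, hφ, ?_⟩
  have hy_eq : (fun n => y (φ n)) = fun n => T (S (a (φ n))) := funext fun n => (hay (φ n)).symm
  rw [hy_eq]
  exact SigmaUawContinuous.uawTendsto hT (S.exists_norm_apply_le_of_mem_Icc fun n => ha (φ n)) hz
end

section
/- Let E and F be Banach lattices and let (T_n) be a sequence of AM-σ-un-compact continuous linear operators from E to F converging to a continuous linear operator T in the operator norm. Then T is AM-σ-un-compact. -/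
open Filter Topology

variable {E F : Type*}
  [NormedAddCommGroup E] [Lattice E] [HasSolidNorm E] [IsOrderedAddMonoid E] [NormedSpace ℝ E] [CompleteSpace E]
  [NormedAddCommGroup F] [Lattice F] [HasSolidNorm F] [IsOrderedAddMonoid F] [NormedSpace ℝ F] [CompleteSpace F]

/-!
Along a diagonal subsequence of `a_n ∈ [-x, x]`, every `T_k a_n` un-converges, to `z_k` say.
The `a_n` are bounded by `‖x‖`, so `T_k a_n → T a_n` uniformly in `n`; testing against
`u = |z_k - z_j|` then shows that `(z_k)` is Cauchy in norm. Its limit is the un-limit of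
`T a_n`, because `a ↦ ‖|a| ⊓ u‖` is 1-Lipschitz.
-/

theorem exists_nested_strictMono {P : ℕ → (ℕ → ℕ) → Prop}
    (hP : ∀ k ψ, StrictMono ψ → ∃ θ : ℕ → ℕ, StrictMono θ ∧ P k (ψ ∘ θ)) :
    ∃ g : ℕ → ℕ → ℕ, (∀ k, StrictMono (g k)) ∧ (∀ k, P k (g k)) ∧
      ∀ k, ∃ θ : ℕ → ℕ, StrictMono θ ∧ g (k + 1) = g k ∘ θ := by
  choose θ hθ hPθ using hP
  let chain : ℕ → {ψ : ℕ → ℕ // StrictMono ψ} := fun k =>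
    Nat.rec ⟨id, strictMono_id⟩ (fun k ψ => ⟨ψ.1 ∘ θ k ψ.1 ψ.2, ψ.2.comp (hθ _ _ _)⟩) k
  exact ⟨fun k => (chain (k + 1)).1, fun k => (chain (k + 1)).2, fun k => hPθ _ _ _,
    fun k => ⟨_, hθ _ _ _, rfl⟩⟩

section Nested

variable {g : ℕ → ℕ → ℕ} (hg : ∀ k, StrictMono (g k))
  (hnest : ∀ k, ∃ θ : ℕ → ℕ, StrictMono θ ∧ g (k + 1) = g k ∘ θ)
include hnest

theorem exists_strictMono_eq_comp_of_nested {k j : ℕ} (hkj : k ≤ j) :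
    ∃ θ : ℕ → ℕ, StrictMono θ ∧ g j = g k ∘ θ := by
  induction j, hkj using Nat.le_induction with
  | base => exact ⟨id, strictMono_id, rfl⟩
  | succ j _ ih =>
    obtain ⟨θ, hθ, he⟩ := ih
    obtain ⟨θ', hθ', he'⟩ := hnest j
    exact ⟨θ ∘ θ', hθ.comp hθ', by rw [he', he]; rfl⟩

theorem exists_ge_diag_eq_of_nested {k n : ℕ} (hkn : k ≤ n) : ∃ m ≥ n, g n n = g k m := by
  obtain ⟨θ, hθ, he⟩ := exists_strictMono_eq_comp_of_nested hnest hkn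
  exact ⟨θ n, hθ.le_apply, by rw [he]; rfl⟩

include hg in
theorem strictMono_diag_of_nested : StrictMono fun n => g n n := by
  refine strictMono_nat_of_lt_succ fun n => ?_
  obtain ⟨θ, hθ, he⟩ := hnest n
  rw [he]
  exact hg n (n.lt_succ_self.trans_le hθ.le_apply)

end Nested

theorem exists_strictMono_diagonal {P : ℕ → (ℕ → ℕ) → Prop}
    (hP : ∀ k ψ, StrictMono ψ → ∃ θ : ℕ → ℕ, StrictMono θ ∧ P k (ψ ∘ θ)) :
    ∃ φ : ℕ → ℕ, StrictMono φ ∧ ∀ k, ∃ ψ, P k ψ ∧ ∀ᶠ n in atTop, ∃ m ≥ n, φ n = ψ m := by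
  obtain ⟨g, hg, hPg, hnest⟩ := exists_nested_strictMono hP
  exact ⟨_, strictMono_diag_of_nested hg hnest,
    fun k => ⟨g k, hPg k, eventually_atTop.2 ⟨k, fun _ => exists_ge_diag_eq_of_nested hnest⟩⟩⟩

theorem tendsto_of_eventually_exists_ge {α : Type*} {s t : ℕ → α} {l : Filter α}
    (hs : Tendsto s atTop l) (h : ∀ᶠ n in atTop, ∃ m ≥ n, t n = s m) : Tendsto t atTop l := by
  refine fun V hV => mem_map.2 ?_
  obtain ⟨N, hN⟩ := eventually_atTop.1 (hs hV)
  filter_upwards [h, eventually_ge_atTop N] with n ⟨m, hm, he⟩ hn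
  rw [Set.mem_preimage, he]
  exact hN m (hn.trans hm)

theorem add_inf_le_inf_add_inf {α : Type*} [Lattice α] [AddCommGroup α] [IsOrderedAddMonoid α]
    {p q u : α} (hp : 0 ≤ p) (hq : 0 ≤ q) (hu : 0 ≤ u) : (p + q) ⊓ u ≤ p ⊓ u + q ⊓ u := by
  rw [add_inf, inf_add, inf_add]
  exact le_inf (le_inf inf_le_left (inf_le_right.trans (le_add_of_nonneg_right hq)))
    (le_inf (inf_le_right.trans (le_add_of_nonneg_left hp))
      (inf_le_right.trans (le_add_of_nonneg_left hu)))

section SolidNorm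

variable {α : Type*} [NormedAddCommGroup α] [Lattice α] [HasSolidNorm α] [IsOrderedAddMonoid α]

theorem norm_abs_add_inf_le (p q : α) {u : α} (hu : 0 ≤ u) :
    ‖|p + q| ⊓ u‖ ≤ ‖|p| ⊓ u‖ + ‖|q| ⊓ u‖ := by
  refine (HasSolidNorm.solid ?_).trans (norm_add_le _ _)
  rw [abs_of_nonneg (le_inf (abs_nonneg _) hu),
    abs_of_nonneg (add_nonneg (le_inf (abs_nonneg p) hu) (le_inf (abs_nonneg q) hu))]
  exact (inf_le_inf_right u (abs_add_le p q)).trans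
    (add_inf_le_inf_add_inf (abs_nonneg p) (abs_nonneg q) hu)

theorem norm_abs_inf_le_add_norm_sub (p q u : α) : ‖|p| ⊓ u‖ ≤ ‖|q| ⊓ u‖ + ‖p - q‖ := by
  refine (norm_le_insert' _ (|q| ⊓ u)).trans ?_
  gcongr
  calc ‖|p| ⊓ u - |q| ⊓ u‖ ≤ ‖|p| - |q|‖ + ‖u - u‖ := norm_inf_sub_inf_le_add_norm _ _ _ _
    _ ≤ ‖p - q‖ := by
      rw [sub_self, norm_zero, add_zero]
      exact HasSolidNorm.solid (abs_abs_sub_abs_le p q)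

theorem norm_le_of_mem_Icc_neg {a x : α} (ha : a ∈ Set.Icc (-x) x) : ‖a‖ ≤ ‖x‖ :=
  HasSolidNorm.solid (abs_le_abs ha.2 (neg_le.mp ha.1))

end SolidNorm

section UnConvergence

variable {α : Type*} [NormedAddCommGroup α] [Lattice α]

theorem UnTendsto.of_eventually_exists_ge {y y' : ℕ → α} {z : α} (hy : UnTendsto y z)
    (h : ∀ᶠ n in atTop, ∃ m ≥ n, y' n = y m) : UnTendsto y' z := fun u hu =>
  tendsto_of_eventually_exists_ge (hy u hu) (h.mono fun _ ⟨m, hm, he⟩ => ⟨m, hm, by rw [he]⟩)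

variable [HasSolidNorm α] [IsOrderedAddMonoid α]

theorem norm_sub_le_of_unTendsto {y w : ℕ → α} {a b : α} {C : ℝ} (hy : UnTendsto y a)
    (hw : UnTendsto w b) (h : ∀ n, ‖y n - w n‖ ≤ C) : ‖a - b‖ ≤ C := by
  have hu : 0 ≤ |a - b| := abs_nonneg _
  have hbound : ∀ n, ‖a - b‖ ≤ ‖|y n - a| ⊓ |a - b|‖ + (‖|w n - b| ⊓ |a - b|‖ + C) := by
    intro n
    calc ‖a - b‖ = ‖|(a - y n) + ((w n - b) + (y n - w n))| ⊓ |a - b|‖ := by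
          rw [show (a - y n) + ((w n - b) + (y n - w n)) = a - b by abel, inf_idem,
            norm_abs_eq_norm]
      _ ≤ ‖|a - y n| ⊓ |a - b|‖ + ‖|(w n - b) + (y n - w n)| ⊓ |a - b|‖ :=
          norm_abs_add_inf_le _ _ hu
      _ ≤ ‖|y n - a| ⊓ |a - b|‖ + (‖|w n - b| ⊓ |a - b|‖ + C) := by
          rw [abs_sub_comm]
          gcongr
          refine (norm_abs_inf_le_add_norm_sub _ (w n - b) _).trans ?_
          rw [add_sub_cancel_left]
          gcongr
          exact h n
  have hlim := (hy _ hu).add ((hw _ hu).add_const C)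
  rw [zero_add, zero_add] at hlim
  exact ge_of_tendsto' hlim hbound

theorem UnTendsto.of_tendstoUniformly {w : ℕ → ℕ → α} {y z : ℕ → α} {z₀ : α}
    (hw : ∀ k, UnTendsto (w k) (z k)) (hz : Tendsto z atTop (𝓝 z₀))
    (hwy : TendstoUniformly w y atTop) : UnTendsto y z₀ := by
  intro u hu
  rw [Metric.tendsto_atTop]
  intro ε hε
  obtain ⟨k, hwk, hzk⟩ := ((Metric.tendstoUniformly_iff.1 hwy (ε / 3) (by positivity)).and
    (hz.eventually (Metric.ball_mem_nhds z₀ (by positivity : (0 : ℝ) < ε / 3)))).exists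
  obtain ⟨N, hN⟩ := Metric.tendsto_atTop.1 (hw k u hu) (ε / 3) (by positivity)
  refine ⟨N, fun n hn => ?_⟩
  have hNn := hN n hn
  rw [Real.dist_eq, sub_zero, abs_of_nonneg (norm_nonneg _)] at hNn ⊢
  calc ‖|y n - z₀| ⊓ u‖ ≤ ‖|w k n - z k| ⊓ u‖ + ‖(y n - w k n) - (z₀ - z k)‖ := by
        rw [show (y n - w k n) - (z₀ - z k) = (y n - z₀) - (w k n - z k) by abel]
        exact norm_abs_inf_le_add_norm_sub _ _ _
    _ ≤ ‖|w k n - z k| ⊓ u‖ + (dist (y n) (w k n) + dist (z k) z₀) := by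
        rw [dist_eq_norm, dist_eq_norm, norm_sub_rev (z k)]
        gcongr
        exact norm_sub_le _ _
    _ < ε / 3 + (ε / 3 + ε / 3) := add_lt_add hNn (add_lt_add (hwk n) hzk)
    _ = ε := by ring

theorem cauchySeq_of_unTendsto {w : ℕ → ℕ → α} {z : ℕ → α} (hw : ∀ k, UnTendsto (w k) (z k))
    (h : UniformCauchySeqOn w atTop Set.univ) : CauchySeq z := by
  refine Metric.cauchySeq_iff.2 fun ε hε => ?_
  obtain ⟨N, hN⟩ := Metric.uniformCauchySeqOn_iff.1 h (ε / 2) (half_pos hε)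
  refine ⟨N, fun m hm n hn => ?_⟩
  rw [dist_eq_norm]
  refine (norm_sub_le_of_unTendsto (hw m) (hw n) fun i => ?_).trans_lt (half_lt_self hε)
  rw [← dist_eq_norm]
  exact (hN m hm n hn i trivial).le

theorem exists_unTendsto_of_tendstoUniformly [CompleteSpace α] {w : ℕ → ℕ → α} {y z : ℕ → α}
    (hw : ∀ k, UnTendsto (w k) (z k)) (hwy : TendstoUniformly w y atTop) :
    ∃ z₀, UnTendsto y z₀ := by
  obtain ⟨z₀, hz₀⟩ := cauchySeq_tendsto_of_complete
    (cauchySeq_of_unTendsto hw (tendstoUniformlyOn_univ.2 hwy).uniformCauchySeqOn)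
  exact ⟨z₀, .of_tendstoUniformly hw hz₀ hwy⟩

end UnConvergence

theorem ContinuousLinearMap.tendstoUniformly_apply_of_tendsto {𝕜 V W ι κ : Type*}
    [NontriviallyNormedField 𝕜] [SeminormedAddCommGroup V] [NormedSpace 𝕜 V]
    [SeminormedAddCommGroup W] [NormedSpace 𝕜 W] {S : ι → V →L[𝕜] W} {S₀ : V →L[𝕜] W}
    {l : Filter ι} (hS : Tendsto S l (𝓝 S₀)) {a : κ → V} {C : ℝ} (ha : ∀ i, ‖a i‖ ≤ C) :
    TendstoUniformly (fun k i => S k (a i)) (fun i => S₀ (a i)) l := by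
  have hSC : Tendsto (fun k => ‖S k - S₀‖ * C) l (𝓝 0) := by
    simpa using (tendsto_iff_norm_sub_tendsto_zero.1 hS).mul_const C
  refine Metric.tendstoUniformly_iff.2 fun ε hε => ?_
  filter_upwards [hSC.eventually (gt_mem_nhds hε)] with k hk i
  calc dist (S₀ (a i)) (S k (a i)) = ‖(S k - S₀) (a i)‖ := by
        rw [dist_comm, dist_eq_norm, sub_apply]
    _ ≤ ‖S k - S₀‖ * C := ((S k - S₀).le_opNorm _).trans (by gcongr; exact ha i)
    _ < ε := hk

/-- The AM-σ-un-compact operators are closed under operator-norm limits. -/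
theorem aMSigmaUnCompact_of_tendsto
    (Tn : ℕ → E →L[ℝ] F) (hTn : ∀ n, AMSigmaUnCompact (Tn n))
    (T : E →L[ℝ] F) (hlim : Tendsto (fun n => ‖Tn n - T‖) atTop (nhds 0)) :
    AMSigmaUnCompact T := by
  intro x hx y hy
  choose a ha hTa using hy
  obtain ⟨φ, hφ, hdiag⟩ := exists_strictMono_diagonal
    (P := fun k ψ => ∃ z, UnTendsto (fun n => Tn k (a (ψ n))) z) fun k ψ _ => by
      obtain ⟨z, θ, hθ, hz⟩ := hTn k x hx _ fun n => ⟨a (ψ n), ha _, rfl⟩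
      exact ⟨θ, hθ, z, hz⟩
  choose ψ hψ using hdiag
  choose z hz using fun k => (hψ k).1
  have hk : ∀ k, UnTendsto (fun n => Tn k (a (φ n))) (z k) := fun k =>
    (hz k).of_eventually_exists_ge ((hψ k).2.mono fun _ ⟨m, hm, he⟩ => ⟨m, hm, by rw [he]⟩)
  obtain ⟨z₀, hz₀⟩ := exists_unTendsto_of_tendstoUniformly hk
    (ContinuousLinearMap.tendstoUniformly_apply_of_tendsto
      (tendsto_iff_norm_sub_tendsto_zero.2 hlim) fun n => norm_le_of_mem_Icc_neg (ha (φ n)))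
  exact ⟨z₀, φ, hφ, by simpa only [hTa] using hz₀⟩
end

section
/- Let E and F be Banach lattices and let S, T : E → F be continuous linear operators with 0 ≤ S ≤ T in the operator order. If T is a lattice homomorphism and T is AM-σ-un-compact, then S is AM-σ-un-compact. -/
open Filter Topology

/-!
Since `T` is a lattice homomorphism and `0 ≤ S ≤ T`, we have
`|S v| ≤ S |v| ≤ T |v| = |T v|`. Given `aₙ ∈ [-x, x]`, pick a subsequence along which `T aₙ`
un-converges to some `z`. With `u = S x + S x` we get
`|S aₙ - S aₘ| ≤ |T aₙ - T aₘ| ⊓ u ≤ |T aₙ - z| ⊓ u + |T aₘ - z| ⊓ u`,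
so `S aₙ` is norm-Cauchy along that subsequence. Its norm limit in the Banach lattice `F` is in
particular an un-limit.
-/

section LatticeGroup

variable {G : Type*} [Lattice G] [AddCommGroup G] [IsOrderedAddMonoid G]

theorem abs_sub_le_abs_sub_add_abs_sub (a b c : G) : |a - b| ≤ |a - c| + |b - c| := by
  calc |a - b| = |(a - c) + -(b - c)| := by rw [← sub_eq_add_neg, sub_sub_sub_cancel_right]
    _ ≤ |a - c| + |-(b - c)| := abs_add_le _ _
    _ = |a - c| + |b - c| := by rw [abs_neg]

theorem add_inf_le_inf_add_inf_s10 {a b c : G} (ha : 0 ≤ a) (hb : 0 ≤ b) (hc : 0 ≤ c) :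
    (a + b) ⊓ c ≤ a ⊓ c + b ⊓ c := by
  rw [add_inf, inf_add, inf_add]
  refine le_inf (le_inf inf_le_left ?_) (le_inf ?_ ?_)
  · exact inf_le_right.trans (le_add_of_nonneg_right hb)
  · exact inf_le_right.trans (le_add_of_nonneg_left ha)
  · exact inf_le_right.trans (le_add_of_nonneg_left hc)

end LatticeGroup

section LatticeHom

variable {G H Φ : Type*} [Lattice G] [AddCommGroup G] [Lattice H] [AddCommGroup H]
  [FunLike Φ G H] [AddMonoidHomClass Φ G H]

theorem abs_map_le_map_abs {f : Φ} (hf : Monotone f) (v : G) : |f v| ≤ f |v| :=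
  abs_le'.2 ⟨hf (le_abs_self v), by simpa only [map_neg] using hf (neg_le_abs v)⟩

theorem abs_map_le_of_mem_Icc [IsOrderedAddMonoid G] {f : Φ} (hf : Monotone f) {v x : G}
    (hv : v ∈ Set.Icc (-x) x) : |f v| ≤ f x :=
  abs_le'.2 ⟨hf hv.2, by simpa only [map_neg] using hf (neg_le.1 hv.1)⟩

theorem map_abs_of_map_sup {f : Φ} (hf : ∀ x y, f (x ⊔ y) = f x ⊔ f y) (v : G) :
    f |v| = |f v| := by
  rw [abs, abs, hf, map_neg]

end LatticeHom

section SolidNorm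

variable {F : Type*} [NormedAddCommGroup F] [Lattice F] [HasSolidNorm F] [IsOrderedAddMonoid F]

theorem unTendsto_of_tendsto {s : ℕ → F} {w : F} (hs : Tendsto s atTop (𝓝 w)) :
    UnTendsto s w := by
  intro u hu
  refine squeeze_zero (fun _ => norm_nonneg _) (fun n => ?_)
    (tendsto_iff_norm_sub_tendsto_zero.1 hs)
  rw [← norm_abs_eq_norm (s n - w)]
  exact norm_le_norm_of_abs_le_abs (abs_le_abs_of_nonneg (le_inf (abs_nonneg _) hu) inf_le_left)

theorem cauchySeq_of_abs_sub_le_of_unTendsto {s t : ℕ → F} {z u : F} (ht : UnTendsto t z)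
    (hst : ∀ n m, |s n - s m| ≤ |t n - t m|) (hsu : ∀ n m, |s n - s m| ≤ u) :
    CauchySeq s := by
  have hu : 0 ≤ u := (abs_nonneg _).trans (hsu 0 0)
  set g : ℕ → ℝ := fun n => ‖|t n - z| ⊓ u‖
  have hle : ∀ n m, |s n - s m| ≤ |t n - z| ⊓ u + |t m - z| ⊓ u := fun n m =>
    calc |s n - s m| ≤ |t n - t m| ⊓ u := le_inf (hst n m) (hsu n m)
      _ ≤ (|t n - z| + |t m - z|) ⊓ u :=
        inf_le_inf_right u (abs_sub_le_abs_sub_add_abs_sub _ _ _)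
      _ ≤ |t n - z| ⊓ u + |t m - z| ⊓ u :=
        add_inf_le_inf_add_inf_s10 (abs_nonneg _) (abs_nonneg _) hu
  have hdist : ∀ n m, dist (s n) (s m) ≤ g n + g m := fun n m =>
    calc dist (s n) (s m) = ‖|s n - s m|‖ := by rw [dist_eq_norm, norm_abs_eq_norm]
      _ ≤ ‖|t n - z| ⊓ u + |t m - z| ⊓ u‖ :=
        norm_le_norm_of_abs_le_abs (abs_le_abs_of_nonneg (abs_nonneg _) (hle n m))
      _ ≤ g n + g m := norm_add_le _ _
  have hg : Tendsto (fun p : ℕ × ℕ => g p.1 + g p.2) atTop (𝓝 0) := by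
    rw [← prod_atTop_atTop_eq]
    simpa using ((ht u hu).comp tendsto_fst).add ((ht u hu).comp tendsto_snd)
  exact cauchySeq_iff_tendsto_dist_atTop_0.2
    (squeeze_zero (fun _ => dist_nonneg) (fun p => hdist p.1 p.2) hg)

end SolidNorm

section Operators

variable {E F : Type*} [NormedAddCommGroup E] [Lattice E] [IsOrderedAddMonoid E] [NormedSpace ℝ E]
  [NormedAddCommGroup F] [Lattice F] [IsOrderedAddMonoid F] [NormedSpace ℝ F]

theorem OpLE.monotone_of_zero {S : E →L[ℝ] F} (hS : OpLE 0 S) : Monotone S := fun v w hvw => by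
  simpa only [map_sub, zero_apply, sub_self, sub_nonneg] using hS (w - v) (sub_nonneg.2 hvw)

theorem abs_map_le_abs_map_of_opLE {S T : E →L[ℝ] F} (hS0 : OpLE 0 S) (hST : OpLE S T)
    (hhom : ∀ x y : E, T (x ⊔ y) = T x ⊔ T y) (v : E) : |S v| ≤ |T v| :=
  calc |S v| ≤ S |v| := abs_map_le_map_abs hS0.monotone_of_zero v
    _ ≤ T |v| := hST _ (abs_nonneg v)
    _ = |T v| := map_abs_of_map_sup hhom v

end Operators

variable {E F : Type*}
  [NormedAddCommGroup E] [Lattice E] [HasSolidNorm E] [IsOrderedAddMonoid E] [NormedSpace ℝ E] [CompleteSpace E]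
  [NormedAddCommGroup F] [Lattice F] [HasSolidNorm F] [IsOrderedAddMonoid F] [NormedSpace ℝ F] [CompleteSpace F]

/-- If `0 ≤ S ≤ T`, `T` is a lattice homomorphism and `T` is AM-σ-un-compact, then so
is `S`. -/
theorem aMSigmaUnCompact_of_dominated_latticeHom
    (S T : E →L[ℝ] F) (hS0 : OpLE 0 S) (hST : OpLE S T)
    (hhom : ∀ x y : E, T (x ⊔ y) = T x ⊔ T y)
    (hT : AMSigmaUnCompact T) :
    AMSigmaUnCompact S := by
  intro x hx y hy
  choose a ha hya using hy
  obtain rfl : y = fun n => S (a n) := funext fun n => (hya n).symm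
  obtain ⟨z, φ, hφ, hz⟩ := hT x hx (fun n => T (a n)) (fun n => ⟨a n, ha n, rfl⟩)
  have hbound : ∀ n, |S (a n)| ≤ S x := fun n =>
    abs_map_le_of_mem_Icc hS0.monotone_of_zero (ha n)
  have hcauchy : CauchySeq fun n => S (a (φ n)) := by
    refine cauchySeq_of_abs_sub_le_of_unTendsto (u := S x + S x) hz (fun n m => ?_) (fun n m => ?_)
    · simpa only [map_sub] using abs_map_le_abs_map_of_opLE hS0 hST hhom (a (φ n) - a (φ m))
    · calc |S (a (φ n)) - S (a (φ m))| ≤ |S (a (φ n))| + |S (a (φ m))| := by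
            simpa only [sub_zero] using abs_sub_le_abs_sub_add_abs_sub _ _ (0 : F)
        _ ≤ S x + S x := add_le_add (hbound _) (hbound _)
  obtain ⟨w, hw⟩ := cauchySeq_tendsto_of_complete hcauchy
  exact ⟨w, φ, hφ, unTendsto_of_tendsto hw⟩
end

section
/- Let E and F be Banach lattices. Every order bounded AM-σ-un-compact continuous linear operator T : E → F is AM-compact. -/
/-!
For a sequence `y` in an order interval `[-w, w]`, un-convergence to `z` is norm convergence:
`|y n - z| ≤ w + |z| =: u` for all `n`, so `|y n - z| ⊓ u = |y n - z|`. Hence every sequence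
in the image of `[-x, x]` has a norm-convergent subsequence, and in a complete space this makes
the closure of the image compact.
-/

open Filter Topology

theorem totallyBounded_of_forall_exists_tendsto_subseq {X : Type*} [UniformSpace X] {s : Set X}
    (h : ∀ u : ℕ → X, (∀ n, u n ∈ s) →
      ∃ (z : X) (φ : ℕ → ℕ), StrictMono φ ∧ Tendsto (u ∘ φ) atTop (𝓝 z)) :
    TotallyBounded s := by
  intro V hV
  contrapose! h
  obtain ⟨u, hu_mem, hu_far⟩ : ∃ u : ℕ → X, (∀ n, u n ∈ s) ∧
      ∀ n m, m < n → u m ∉ UniformSpace.ball (u n) V := by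
    simp only [Set.not_subset, Set.mem_iUnion₂, not_exists, exists_prop] at h
    simpa only [forall_and, Set.forall_mem_image, not_and] using! Set.seq_of_forall_finite_exists h
  refine ⟨u, hu_mem, fun z φ hφ hlim => ?_⟩
  obtain ⟨N, hN⟩ : ∃ N, ∀ p q, p ≥ N → q ≥ N → (u (φ p), u (φ q)) ∈ V :=
    hlim.cauchySeq.mem_entourage hV
  exact hu_far (φ (N + 1)) (φ N) (hφ N.lt_add_one) (hN (N + 1) N N.le_succ le_rfl)

theorem isCompact_closure_of_forall_exists_tendsto_subseq {X : Type*} [UniformSpace X]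
    [CompleteSpace X] {s : Set X}
    (h : ∀ u : ℕ → X, (∀ n, u n ∈ s) →
      ∃ (z : X) (φ : ℕ → ℕ), StrictMono φ ∧ Tendsto (u ∘ φ) atTop (𝓝 z)) :
    IsCompact (closure s) :=
  isCompact_iff_totallyBounded_isComplete.mpr
    ⟨(totallyBounded_of_forall_exists_tendsto_subseq h).closure, isClosed_closure.isComplete⟩

theorem abs_sub_le_of_mem_Icc {G : Type*} [Lattice G] [AddCommGroup G] [AddLeftMono G]
    {a w : G} (ha : a ∈ Set.Icc (-w) w) (z : G) : |a - z| ≤ w + |z| :=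
  calc |a - z| ≤ |a| + |z| := by simpa only [sub_eq_add_neg, abs_neg] using abs_add_le a (-z)
    _ ≤ w + |z| := by gcongr; exact abs_le'.mpr ⟨ha.2, neg_le.mpr ha.1⟩

section UnConvergence

variable {F : Type*} [NormedAddCommGroup F] [Lattice F] [HasSolidNorm F] [IsOrderedAddMonoid F]

theorem UnTendsto.tendsto_of_abs_sub_le {y : ℕ → F} {z u : F} (h : UnTendsto y z)
    (hu : ∀ n, |y n - z| ≤ u) : Tendsto y atTop (𝓝 z) := by
  have hu₀ : 0 ≤ u := (abs_nonneg _).trans (hu 0)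
  rw [tendsto_iff_norm_sub_tendsto_zero]
  simpa only [inf_eq_left.mpr (hu _), norm_abs_eq_norm] using h u hu₀

theorem RelSeqUnCompact.isCompact_closure_of_subset_Icc [CompleteSpace F] {A : Set F}
    (hA : RelSeqUnCompact A) {w : F} (hw : A ⊆ Set.Icc (-w) w) : IsCompact (closure A) :=
  isCompact_closure_of_forall_exists_tendsto_subseq fun y hy =>
    let ⟨z, φ, hφ, hun⟩ := hA y hy
    ⟨z, φ, hφ, hun.tendsto_of_abs_sub_le fun n => abs_sub_le_of_mem_Icc (hw (hy (φ n))) z⟩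

end UnConvergence

variable {E F : Type*}
  [NormedAddCommGroup E] [Lattice E] [HasSolidNorm E] [IsOrderedAddMonoid E] [NormedSpace ℝ E] [CompleteSpace E]
  [NormedAddCommGroup F] [Lattice F] [HasSolidNorm F] [IsOrderedAddMonoid F] [NormedSpace ℝ F] [CompleteSpace F]

/-- Every order bounded AM-σ-un-compact operator is AM-compact. -/
theorem orderBounded_aMSigmaUnCompact_aMCompact
    (T : E →L[ℝ] F)
    (hob : ∀ x : E, 0 ≤ x → ∃ w : F, T '' Set.Icc (-x) x ⊆ Set.Icc (-w) w)
    (hT : AMSigmaUnCompact T) :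
    ∀ x : E, 0 ≤ x → IsCompact (closure (T '' Set.Icc (-x) x)) := by
  intro x hx
  obtain ⟨w, hw⟩ := hob x hx
  exact (hT x hx).isCompact_closure_of_subset_Icc hw
end

section
/- Let E and F be Banach lattices. Let K^r denote the set of AM-σ-un-compact continuous linear operators T : E → F for which there exists a positive AM-σ-un-compact continuous linear operator S with −S ≤ T ≤ S, and for T ∈ K^r set ν(T) = inf{‖S‖ : S positive, AM-σ-un-compact, −S ≤ T ≤ S}. Then K^r is complete under ν: for every sequence (T_n) in K^r that is Cauchy with respect to ν (for every ε > 0 there is N such that ν(T_n − T_m) < ε for all n, m ≥ N), there exists T ∈ K^r with ν(T_n − T) → 0. -/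
open Filter Topology

/-- `T` belongs to `K^r`: `T` is AM-σ-un-compact and is dominated by a positive
AM-σ-un-compact operator. -/
def KrAMUn {E F : Type*} [NormedAddCommGroup E] [Lattice E] [HasSolidNorm E] [IsOrderedAddMonoid E] [NormedSpace ℝ E]
    [NormedAddCommGroup F] [Lattice F] [HasSolidNorm F] [IsOrderedAddMonoid F] [NormedSpace ℝ F] (T : E →L[ℝ] F) : Prop :=
  AMSigmaUnCompact T ∧
    ∃ S : E →L[ℝ] F, OpLE 0 S ∧ AMSigmaUnCompact S ∧ OpLE (-S) T ∧ OpLE T S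

/-- The AM-un-norm `ν(T) = inf {‖S‖ : S positive, AM-σ-un-compact, -S ≤ T ≤ S}`. -/
noncomputable def nuAMUn {E F : Type*} [NormedAddCommGroup E] [Lattice E] [HasSolidNorm E] [IsOrderedAddMonoid E] [NormedSpace ℝ E]
    [NormedAddCommGroup F] [Lattice F] [HasSolidNorm F] [IsOrderedAddMonoid F] [NormedSpace ℝ F] (T : E →L[ℝ] F) : ℝ :=
  sInf {c : ℝ | ∃ S : E →L[ℝ] F,
    OpLE 0 S ∧ AMSigmaUnCompact S ∧ OpLE (-S) T ∧ OpLE T S ∧ ‖S‖ = c}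

/-!
A `ν`-Cauchy sequence is Cauchy in operator norm, because `|T x| ≤ S x` for `x ≥ 0` forces
`‖T‖ ≤ ‖S‖`; let `T` be its norm limit. AM-σ-un-compactness survives norm limits: along a
diagonal subsequence every approximant `Tₖ w` un-converges, to limits `zₖ` which form a norm-Cauchy
sequence, and `T w` un-converges to `lim zₖ`. Finally, passing to a subsequence with
`ν(T_{φ k} - T_{φ (k+1)}) < ε 2⁻ᵏ`, the norm-convergent series of the corresponding dominators
dominates `T_n - T`, which gives both `T ∈ K^r` and `ν(T_n - T) → 0`.
-/

section LatticeInf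

variable {α : Type*} [Lattice α] [AddCommGroup α] [IsOrderedAddMonoid α]

lemma inf_add_le_add_inf {a b u : α} (ha : 0 ≤ a) (hb : 0 ≤ b) (hu : 0 ≤ u) :
    (a + b) ⊓ u ≤ a ⊓ u + b ⊓ u := by
  have h : a ⊓ u + b ⊓ u = ((a + b) ⊓ (a + u)) ⊓ ((u + b) ⊓ (u + u)) := by
    rw [add_inf, inf_add, inf_add]; ac_rfl
  rw [h]
  refine le_inf (le_inf inf_le_left ?_) (le_inf ?_ ?_)
  · exact inf_le_right.trans (le_add_of_nonneg_left ha)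
  · exact inf_le_right.trans (le_add_of_nonneg_right hb)
  · exact inf_le_right.trans (le_add_of_nonneg_right hu)

lemma abs_add_inf_le (a b : α) {u : α} (hu : 0 ≤ u) : |a + b| ⊓ u ≤ |a| ⊓ u + |b| ⊓ u :=
  (inf_le_inf_right u (abs_add_le a b)).trans (inf_add_le_add_inf (abs_nonneg a) (abs_nonneg b) hu)

end LatticeInf

section SolidNorm

variable {F : Type*} [NormedAddCommGroup F] [Lattice F] [HasSolidNorm F] [IsOrderedAddMonoid F]

lemma norm_abs_add_inf_le_s16 (a b : F) {u : F} (hu : 0 ≤ u) :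
    ‖|a + b| ⊓ u‖ ≤ ‖|a| ⊓ u‖ + ‖|b| ⊓ u‖ := by
  have h0 : 0 ≤ |a + b| ⊓ u := le_inf (abs_nonneg _) hu
  have h0' : 0 ≤ |a| ⊓ u + |b| ⊓ u :=
    add_nonneg (le_inf (abs_nonneg a) hu) (le_inf (abs_nonneg b) hu)
  refine (HasSolidNorm.solid ?_).trans (norm_add_le _ _)
  rw [abs_of_nonneg h0, abs_of_nonneg h0']
  exact abs_add_inf_le a b hu

lemma norm_abs_sub_inf_le (a b c : F) {u : F} (hu : 0 ≤ u) :
    ‖|a - c| ⊓ u‖ ≤ ‖|a - b| ⊓ u‖ + ‖|b - c| ⊓ u‖ := by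
  simpa only [sub_add_sub_cancel] using norm_abs_add_inf_le_s16 (a - b) (b - c) hu

lemma norm_abs_inf_le (a : F) {u : F} (hu : 0 ≤ u) : ‖|a| ⊓ u‖ ≤ ‖a‖ := by
  rw [← norm_abs_eq_norm a]
  refine HasSolidNorm.solid ?_
  rw [abs_of_nonneg (le_inf (abs_nonneg a) hu), abs_abs]
  exact inf_le_left

lemma norm_le_of_mem_Icc_neg_s16 {x v : F} (hv : v ∈ Set.Icc (-x) x) : ‖v‖ ≤ ‖x‖ :=
  HasSolidNorm.solid ((abs_le'.2 ⟨hv.2, neg_le.1 hv.1⟩).trans (le_abs_self x))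

end SolidNorm

lemma cauchySeq_of_dist_le_add {X : Type*} [PseudoMetricSpace X] {z : ℕ → X} {δ : ℕ → ℝ}
    (hδ : Tendsto δ atTop (𝓝 0)) (hz : ∀ k j, dist (z k) (z j) ≤ δ k + δ j) : CauchySeq z := by
  refine Metric.cauchySeq_iff.2 fun ε hε => ?_
  obtain ⟨N, hN⟩ := eventually_atTop.1 (hδ.eventually (gt_mem_nhds (half_pos hε)))
  exact ⟨N, fun k hk j hj => (hz k j).trans_lt (by linarith [hN k hk, hN j hj])⟩

/-- Cantor's diagonal extraction. -/
theorem Nat.exists_strictMono_forall_of_subseq {P : ℕ → (ℕ → ℕ) → Prop}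
    (hex : ∀ k g, ∃ φ : ℕ → ℕ, StrictMono φ ∧ P k (g ∘ φ))
    (hsub : ∀ k g d (m : ℕ → ℕ), P k g → Tendsto m atTop atTop →
      (∀ᶠ n in atTop, d n = g (m n)) → P k d) :
    ∃ d : ℕ → ℕ, StrictMono d ∧ ∀ k, P k d := by
  choose φ hφ hP using hex
  let G : ℕ → ℕ → ℕ := fun k => Nat.rec id (fun k Gk => Gk ∘ φ k Gk) k
  have hG_succ : ∀ k, G (k + 1) = G k ∘ φ k (G k) := fun k => rfl
  have hG_mono : ∀ k, StrictMono (G k) := by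
    intro k
    induction k with
    | zero => exact strictMono_id
    | succ k ih => exact ih.comp (hφ k (G k))
  have hG_sub : ∀ k n, k ≤ n → ∃ ψ : ℕ → ℕ, StrictMono ψ ∧ G n = G k ∘ ψ := by
    intro k n hkn
    induction n, hkn using Nat.le_induction with
    | base => exact ⟨id, strictMono_id, rfl⟩
    | succ n _ ih =>
      obtain ⟨ψ, hψ, hGn⟩ := ih
      exact ⟨ψ ∘ φ n (G n), hψ.comp (hφ n (G n)), by rw [hG_succ, hGn]; rfl⟩
  refine ⟨fun n => G (n + 1) n, strictMono_nat_of_lt_succ fun n => ?_, fun k => ?_⟩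
  · calc G (n + 1) n < G (n + 1) (n + 1) := hG_mono (n + 1) n.lt_succ_self
      _ ≤ G (n + 1) (φ (n + 1) (G (n + 1)) (n + 1)) :=
        (hG_mono (n + 1)).monotone (hφ (n + 1) (G (n + 1))).le_apply
  · have hm : ∀ n, ∃ m, k ≤ n → n ≤ m ∧ G (n + 1) n = G (k + 1) m := by
      intro n
      by_cases hkn : k ≤ n
      · obtain ⟨ψ, hψ, hG⟩ := hG_sub (k + 1) (n + 1) (by omega)
        exact ⟨ψ n, fun _ => ⟨hψ.le_apply, by rw [hG]; rfl⟩⟩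
      · exact ⟨0, fun h => absurd h hkn⟩
    choose m hm using hm
    refine hsub k (G (k + 1)) _ m (hP k (G k)) (tendsto_atTop_mono' atTop ?_ tendsto_id) ?_
    · filter_upwards [eventually_ge_atTop k] with n hn using (hm n hn).1
    · filter_upwards [eventually_ge_atTop k] with n hn using (hm n hn).2

section UnConvergence

variable {F : Type*} [NormedAddCommGroup F] [Lattice F]

lemma UnTendsto.comp {y : ℕ → F} {z : F} (h : UnTendsto y z) {m : ℕ → ℕ}
    (hm : Tendsto m atTop atTop) : UnTendsto (y ∘ m) z :=
  fun u hu => (h u hu).comp hm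

lemma UnTendsto.congr' {y y' : ℕ → F} {z : F} (h : UnTendsto y z) (hy : y =ᶠ[atTop] y') :
    UnTendsto y' z :=
  fun u hu => (h u hu).congr' (hy.mono fun n hn => by rw [hn])

variable [HasSolidNorm F] [IsOrderedAddMonoid F]

lemma UnTendsto.add {y y' : ℕ → F} {z z' : F} (h : UnTendsto y z) (h' : UnTendsto y' z') :
    UnTendsto (fun n => y n + y' n) (z + z') := by
  intro u hu
  refine squeeze_zero (fun n => norm_nonneg _) (fun n => ?_) (by simpa using (h u hu).add (h' u hu))
  rw [add_sub_add_comm]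
  exact norm_abs_add_inf_le_s16 _ _ hu

/-- Test against `u = |za - zb|`, for which `‖|za - zb| ⊓ u‖ = ‖za - zb‖`. -/
lemma UnTendsto.norm_sub_le {a b : ℕ → F} {za zb : F} {c : ℝ} (ha : UnTendsto a za)
    (hb : UnTendsto b zb) (hab : ∀ n, ‖a n - b n‖ ≤ c) : ‖za - zb‖ ≤ c := by
  have hu : 0 ≤ |za - zb| := abs_nonneg _
  have hbound : ∀ n, ‖|za - zb| ⊓ |za - zb|‖ ≤
      ‖|a n - za| ⊓ |za - zb|‖ + c + ‖|b n - zb| ⊓ |za - zb|‖ := fun n =>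
    calc ‖|za - zb| ⊓ |za - zb|‖
        ≤ ‖|za - a n| ⊓ |za - zb|‖ + ‖|a n - zb| ⊓ |za - zb|‖ := norm_abs_sub_inf_le _ _ _ hu
      _ ≤ ‖|a n - za| ⊓ |za - zb|‖ +
          (‖|a n - b n| ⊓ |za - zb|‖ + ‖|b n - zb| ⊓ |za - zb|‖) := by
        rw [abs_sub_comm za]
        gcongr
        exact norm_abs_sub_inf_le _ _ _ hu
      _ ≤ ‖|a n - za| ⊓ |za - zb|‖ + (c + ‖|b n - zb| ⊓ |za - zb|‖) := by
        gcongr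
        exact (norm_abs_inf_le _ hu).trans (hab n)
      _ = _ := by ring
  have hlim := ((ha _ hu).add_const c).add (hb _ hu)
  rw [zero_add, add_zero] at hlim
  simpa only [inf_idem, norm_abs_eq_norm] using ge_of_tendsto' hlim hbound

lemma UnTendsto.of_approx {y : ℕ → F} {yk : ℕ → ℕ → F} {z : ℕ → F} {zl : F} {δ : ℕ → ℝ}
    (hδ : Tendsto δ atTop (𝓝 0)) (happrox : ∀ k n, ‖y n - yk k n‖ ≤ δ k)
    (hk : ∀ k, UnTendsto (yk k) (z k)) (hz : Tendsto z atTop (𝓝 zl)) : UnTendsto y zl := by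
  intro u hu
  refine tendsto_order.2 ⟨fun a ha => .of_forall fun n => ha.trans_le (norm_nonneg _),
    fun ε hε => ?_⟩
  have hε3 : 0 < ε / 3 := by positivity
  obtain ⟨k, hδk, hzk⟩ := ((hδ.eventually (gt_mem_nhds hε3)).and
    ((tendsto_iff_norm_sub_tendsto_zero.1 hz).eventually (gt_mem_nhds hε3))).exists
  filter_upwards [(hk k u hu).eventually (gt_mem_nhds hε3)] with n hn
  calc ‖|y n - zl| ⊓ u‖ ≤ ‖|y n - yk k n| ⊓ u‖ + ‖|yk k n - zl| ⊓ u‖ :=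
        norm_abs_sub_inf_le _ _ _ hu
    _ ≤ ‖y n - yk k n‖ + (‖|yk k n - z k| ⊓ u‖ + ‖z k - zl‖) := by
        gcongr
        · exact norm_abs_inf_le _ hu
        · refine (norm_abs_sub_inf_le _ (z k) _ hu).trans ?_
          gcongr
          exact norm_abs_inf_le _ hu
    _ < ε := by linarith [happrox k n]

lemma exists_unTendsto_subseq_of_approx [CompleteSpace F] {y : ℕ → F} {yk : ℕ → ℕ → F}
    {δ : ℕ → ℝ} (hδ : Tendsto δ atTop (𝓝 0)) (happrox : ∀ k n, ‖y n - yk k n‖ ≤ δ k)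
    (hyk : ∀ k (g : ℕ → ℕ), ∃ (z : F) (φ : ℕ → ℕ), StrictMono φ ∧
      UnTendsto (fun n => yk k (g (φ n))) z) :
    ∃ (z : F) (φ : ℕ → ℕ), StrictMono φ ∧ UnTendsto (fun n => y (φ n)) z := by
  obtain ⟨d, hd, hdk⟩ := Nat.exists_strictMono_forall_of_subseq
    (P := fun k g => ∃ z, UnTendsto (fun n => yk k (g n)) z)
    (fun k g => let ⟨z, φ, hφ, h⟩ := hyk k g; ⟨φ, hφ, z, h⟩)
    (fun k g d m ⟨z, h⟩ hm hdm => ⟨z, (h.comp hm).congr' (hdm.mono fun n hn => by simp [hn])⟩)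
  choose z hz using hdk
  have hzz : ∀ k j, dist (z k) (z j) ≤ δ k + δ j := fun k j => by
    rw [dist_eq_norm]
    refine (hz k).norm_sub_le (hz j) fun n => ?_
    calc ‖yk k (d n) - yk j (d n)‖ = ‖(y (d n) - yk j (d n)) - (y (d n) - yk k (d n))‖ := by
          congr 1; abel
      _ ≤ ‖y (d n) - yk j (d n)‖ + ‖y (d n) - yk k (d n)‖ := norm_sub_le _ _
      _ ≤ δ k + δ j := by linarith [happrox k (d n), happrox j (d n)]
  obtain ⟨zl, hzl⟩ := cauchySeq_tendsto_of_complete (cauchySeq_of_dist_le_add hδ hzz)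
  exact ⟨zl, d, hd, UnTendsto.of_approx hδ (fun k n => happrox k (d n)) hz hzl⟩

end UnConvergence

section Operators

variable {E F : Type*} [NormedAddCommGroup E] [Lattice E] [NormedSpace ℝ E]
  [NormedAddCommGroup F] [Lattice F] [IsOrderedAddMonoid F] [NormedSpace ℝ F]

lemma amSigmaUnCompact_zero : AMSigmaUnCompact (0 : E →L[ℝ] F) := by
  intro x _ y hy
  have hy0 : ∀ n, y n = 0 := fun n => by
    obtain ⟨v, -, hv⟩ := hy n
    rw [← hv]
    rfl
  refine ⟨0, id, strictMono_id, fun u hu => ?_⟩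
  simp [hy0, hu]

/-- The dominators in the definitions of `K^r` and `ν`: `-S ≤ T ≤ S` is encoded as `|T x| ≤ S x`
for `x ≥ 0`, which already forces `S ≥ 0` (see `amUnDominates_iff`). -/
def AMUnDominates (S T : E →L[ℝ] F) : Prop :=
  AMSigmaUnCompact S ∧ ∀ x, 0 ≤ x → |T x| ≤ S x

lemma amUnDominates_iff {S T : E →L[ℝ] F} :
    AMUnDominates S T ↔ OpLE 0 S ∧ AMSigmaUnCompact S ∧ OpLE (-S) T ∧ OpLE T S := by
  simp only [AMUnDominates, OpLE, zero_apply, neg_apply]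
  constructor
  · rintro ⟨hS, h⟩
    exact ⟨fun x hx => (abs_nonneg _).trans (h x hx), hS,
      fun x hx => neg_le.1 (abs_le'.1 (h x hx)).2, fun x hx => (abs_le'.1 (h x hx)).1⟩
  · rintro ⟨-, hS, h₁, h₂⟩
    exact ⟨hS, fun x hx => abs_le'.2 ⟨h₂ x hx, neg_le.1 (h₁ x hx)⟩⟩

lemma AMUnDominates.zero : AMUnDominates (0 : E →L[ℝ] F) 0 :=
  ⟨amSigmaUnCompact_zero, fun x _ => by simp⟩

variable [HasSolidNorm F]

lemma AMSigmaUnCompact.add {T T' : E →L[ℝ] F} (hT : AMSigmaUnCompact T)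
    (hT' : AMSigmaUnCompact T') : AMSigmaUnCompact (T + T') := by
  intro x hx y hy
  choose w hw hTw using hy
  obtain ⟨z, φ, hφ, hz⟩ := hT x hx (fun n => T (w n)) fun n => ⟨w n, hw n, rfl⟩
  obtain ⟨z', ψ, hψ, hz'⟩ := hT' x hx (fun n => T' (w (φ n))) fun n => ⟨w (φ n), hw _, rfl⟩
  refine ⟨z + z', φ ∘ ψ, hφ.comp hψ, ?_⟩
  convert (hz.comp hψ.tendsto_atTop).add hz' using 1
  ext n
  simp [← hTw]

namespace AMUnDominates

lemma add {S S' T T' : E →L[ℝ] F} (h : AMUnDominates S T) (h' : AMUnDominates S' T') :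
    AMUnDominates (S + S') (T + T') :=
  ⟨h.1.add h'.1, fun x hx => (abs_add_le _ _).trans (add_le_add (h.2 x hx) (h'.2 x hx))⟩

lemma sub {S S' T T' : E →L[ℝ] F} (h : AMUnDominates S T) (h' : AMUnDominates S' T') :
    AMUnDominates (S + S') (T - T') := by
  rw [sub_eq_add_neg]
  exact h.add ⟨h'.1, fun x hx => by simpa using h'.2 x hx⟩

end AMUnDominates

variable [HasSolidNorm E] [IsOrderedAddMonoid E]

lemma AMSigmaUnCompact.of_tendsto [CompleteSpace F] {Tk : ℕ → E →L[ℝ] F} {T : E →L[ℝ] F}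
    (hTk : ∀ k, AMSigmaUnCompact (Tk k)) (hT : Tendsto Tk atTop (𝓝 T)) :
    AMSigmaUnCompact T := by
  intro x hx y hy
  choose w hw hTw using hy
  refine exists_unTendsto_subseq_of_approx (yk := fun k n => Tk k (w n))
    (δ := fun k => ‖Tk k - T‖ * ‖x‖) ?_ (fun k n => ?_)
    fun k g => hTk k x hx _ fun n => ⟨w (g n), hw _, rfl⟩
  · simpa using (tendsto_iff_norm_sub_tendsto_zero.1 hT).mul_const ‖x‖
  · calc ‖y n - Tk k (w n)‖ = ‖(Tk k - T) (w n)‖ := by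
          rw [← hTw, ← norm_neg, sub_apply, neg_sub]
      _ ≤ ‖Tk k - T‖ * ‖w n‖ := (Tk k - T).le_opNorm _
      _ ≤ ‖Tk k - T‖ * ‖x‖ := by gcongr; exact norm_le_of_mem_Icc_neg_s16 (hw n)

lemma norm_le_of_abs_apply_le {S T : E →L[ℝ] F} (h : ∀ x, 0 ≤ x → |T x| ≤ S x) : ‖T‖ ≤ ‖S‖ := by
  refine T.opNorm_le_bound (norm_nonneg S) fun v => ?_
  have habs : |T v| ≤ S |v| :=
    calc |T v| = |T v⁺ + -T v⁻| := by
          rw [← map_neg, ← map_add, ← sub_eq_add_neg, posPart_sub_negPart]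
      _ ≤ |T v⁺| + |T v⁻| := by simpa only [abs_neg] using abs_add_le (T v⁺) (-T v⁻)
      _ ≤ S v⁺ + S v⁻ := add_le_add (h _ (posPart_nonneg v)) (h _ (negPart_nonneg v))
      _ = S |v| := by rw [← map_add, posPart_add_negPart]
  calc ‖T v‖ ≤ ‖S |v|‖ := HasSolidNorm.solid (habs.trans (le_abs_self _))
    _ ≤ ‖S‖ * ‖|v|‖ := S.le_opNorm _
    _ = ‖S‖ * ‖v‖ := by rw [norm_abs_eq_norm]

lemma krAMUn_iff {T : E →L[ℝ] F} :
    KrAMUn T ↔ AMSigmaUnCompact T ∧ ∃ S, AMUnDominates S T := by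
  simp only [KrAMUn, amUnDominates_iff]

namespace AMUnDominates

lemma of_tendsto [CompleteSpace F] {Sk Tk : ℕ → E →L[ℝ] F} {S T : E →L[ℝ] F}
    (hS : Tendsto Sk atTop (𝓝 S)) (hT : Tendsto Tk atTop (𝓝 T))
    (h : ∀ k, AMUnDominates (Sk k) (Tk k)) : AMUnDominates S T :=
  ⟨.of_tendsto (fun k => (h k).1) hS, fun x hx =>
    le_of_tendsto_of_tendsto' ((hT.eval_const x).sup_nhds (hT.eval_const x).neg)
      (hS.eval_const x) fun k => (h k).2 x hx⟩

lemma tsum [CompleteSpace F] {U S : ℕ → E →L[ℝ] F} {T : E →L[ℝ] F}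
    (hU : Tendsto U atTop (𝓝 T)) (hS : Summable S)
    (h : ∀ k, AMUnDominates (S k) (U k - U (k + 1))) : AMUnDominates (∑' k, S k) (U 0 - T) := by
  have hpartial : ∀ K, AMUnDominates (∑ k ∈ Finset.range K, S k) (U 0 - U K) := by
    intro K
    induction K with
    | zero => simpa using zero
    | succ K ih => simpa only [Finset.sum_range_succ, sub_add_sub_cancel] using ih.add (h K)
  exact of_tendsto hS.hasSum.tendsto_sum_nat (tendsto_const_nhds.sub hU) hpartial

end AMUnDominates

lemma nuAMUn_nonneg (T : E →L[ℝ] F) : 0 ≤ nuAMUn T :=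
  Real.sInf_nonneg <| by
    rintro _ ⟨S, -, -, -, -, rfl⟩
    exact norm_nonneg S

lemma nuAMUn_le {S T : E →L[ℝ] F} (h : AMUnDominates S T) : nuAMUn T ≤ ‖S‖ := by
  obtain ⟨h₁, h₂, h₃, h₄⟩ := amUnDominates_iff.1 h
  refine csInf_le ⟨0, ?_⟩ ⟨S, h₁, h₂, h₃, h₄, rfl⟩
  rintro _ ⟨S', -, -, -, -, rfl⟩
  exact norm_nonneg S'

lemma exists_amUnDominates_norm_lt {T : E →L[ℝ] F} {c : ℝ} (hT : ∃ S, AMUnDominates S T)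
    (h : nuAMUn T < c) : ∃ S, AMUnDominates S T ∧ ‖S‖ < c := by
  obtain ⟨S, hS⟩ := hT
  obtain ⟨h₁, h₂, h₃, h₄⟩ := amUnDominates_iff.1 hS
  obtain ⟨_, ⟨S', h₁', h₂', h₃', h₄', rfl⟩, hlt⟩ :=
    exists_lt_of_csInf_lt (by exact ⟨‖S‖, S, h₁, h₂, h₃, h₄, rfl⟩) h
  exact ⟨S', amUnDominates_iff.2 ⟨h₁', h₂', h₃', h₄'⟩, hlt⟩

lemma cauchySeq_of_amUnDominates {Tn : ℕ → E →L[ℝ] F}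
    (h : ∀ ε > 0, ∃ N, ∀ n ≥ N, ∀ m ≥ N, ∃ S, AMUnDominates S (Tn n - Tn m) ∧ ‖S‖ < ε) :
    CauchySeq Tn := by
  refine Metric.cauchySeq_iff.2 fun ε hε => ?_
  obtain ⟨N, hN⟩ := h ε hε
  refine ⟨N, fun n hn m hm => ?_⟩
  obtain ⟨S, hS, hSε⟩ := hN n hn m hm
  rw [dist_eq_norm]
  exact (norm_le_of_abs_apply_le hS.2).trans_lt hSε

lemma eventually_amUnDominates_sub_of_tendsto [CompleteSpace F] {Tn : ℕ → E →L[ℝ] F}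
    {T : E →L[ℝ] F}
    (h : ∀ ε > 0, ∃ N, ∀ n ≥ N, ∀ m ≥ N, ∃ S, AMUnDominates S (Tn n - Tn m) ∧ ‖S‖ < ε)
    (hT : Tendsto Tn atTop (𝓝 T)) {ε : ℝ} (hε : 0 < ε) :
    ∀ᶠ n in atTop, ∃ S, AMUnDominates S (Tn n - T) ∧ ‖S‖ < ε := by
  obtain ⟨φ, hφ, hφS⟩ := extraction_forall_of_eventually'
    (P := fun k N => ∀ n ≥ N, ∀ m ≥ N, ∃ S, AMUnDominates S (Tn n - Tn m) ∧
      ‖S‖ < ε / 2 / 2 / 2 ^ k)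
    fun k =>
      let ⟨N, hN⟩ := h (ε / 2 / 2 / 2 ^ k) (by positivity)
      ⟨N, fun _ hN' n hn m hm => hN n (hN'.trans hn) m (hN'.trans hm)⟩
  choose S hS hSε using fun k => hφS k (φ k) le_rfl (φ (k + 1)) (hφ.monotone k.le_succ)
  have hSbound : ∀ k, ‖S k‖ ≤ ε / 2 / 2 / 2 ^ k := fun k => (hSε k).le
  have htail := AMUnDominates.tsum (hT.comp hφ.tendsto_atTop)
    ((summable_geometric_two' _).of_norm_bounded hSbound) hS
  filter_upwards [eventually_ge_atTop (φ 0)] with n hn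
  obtain ⟨S₀, hS₀, hS₀ε⟩ := hφS 0 n hn (φ 0) le_rfl
  refine ⟨S₀ + ∑' k, S k, ?_, ?_⟩
  · simpa only [Function.comp_apply, sub_add_sub_cancel] using hS₀.add htail
  · calc ‖S₀ + ∑' k, S k‖ ≤ ‖S₀‖ + ‖∑' k, S k‖ := norm_add_le _ _
      _ < ε / 2 / 2 / 2 ^ 0 + ε / 2 :=
        add_lt_add_of_lt_of_le hS₀ε (tsum_of_norm_bounded (hasSum_geometric_two' _) hSbound)
      _ < ε := by norm_num; linarith

end Operators

variable {E F : Type*}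
  [NormedAddCommGroup E] [Lattice E] [HasSolidNorm E] [IsOrderedAddMonoid E] [NormedSpace ℝ E] [CompleteSpace E]
  [NormedAddCommGroup F] [Lattice F] [HasSolidNorm F] [IsOrderedAddMonoid F] [NormedSpace ℝ F] [CompleteSpace F]

/-- `K^r` is complete under the AM-un-norm `ν`. -/
theorem krAMUn_complete
    (Tn : ℕ → E →L[ℝ] F) (hTn : ∀ n, KrAMUn (Tn n))
    (hcauchy : ∀ ε : ℝ, 0 < ε → ∃ N : ℕ, ∀ n ≥ N, ∀ m ≥ N, nuAMUn (Tn n - Tn m) < ε) :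
    ∃ T : E →L[ℝ] F, KrAMUn T ∧ Tendsto (fun n => nuAMUn (Tn n - T)) atTop (nhds 0) := by
  have hdom : ∀ n m, ∃ S, AMUnDominates S (Tn n - Tn m) := fun n m =>
    let ⟨_, S, hS⟩ := krAMUn_iff.1 (hTn n)
    let ⟨_, S', hS'⟩ := krAMUn_iff.1 (hTn m)
    ⟨S + S', hS.sub hS'⟩
  have hsmall : ∀ ε > 0, ∃ N, ∀ n ≥ N, ∀ m ≥ N,
      ∃ S, AMUnDominates S (Tn n - Tn m) ∧ ‖S‖ < ε := fun ε hε =>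
    let ⟨N, hN⟩ := hcauchy ε hε
    ⟨N, fun n hn m hm => exists_amUnDominates_norm_lt (hdom n m) (hN n hn m hm)⟩
  obtain ⟨T, hT⟩ := cauchySeq_tendsto_of_complete (cauchySeq_of_amUnDominates hsmall)
  have htail := fun ε (hε : 0 < ε) => eventually_amUnDominates_sub_of_tendsto hsmall hT hε
  refine ⟨T, krAMUn_iff.2 ⟨.of_tendsto (fun n => (krAMUn_iff.1 (hTn n)).1) hT, ?_⟩, ?_⟩
  · obtain ⟨n, S, hS, -⟩ := (htail 1 one_pos).exists
    obtain ⟨_, S', hS'⟩ := krAMUn_iff.1 (hTn n)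
    exact ⟨S' + S, by simpa only [sub_sub_cancel] using hS'.sub hS⟩
  · refine tendsto_order.2 ⟨fun a ha => .of_forall fun n => ha.trans_le (nuAMUn_nonneg _),
      fun a ha => ?_⟩
    exact (htail a ha).mono fun n ⟨S, hS, hSa⟩ => (nuAMUn_le hS).trans_lt hSa
end
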